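/- arXiv:2206.07801 — 4 statements merged into one kernel-verified Lean document; each statement's English description precedes it below -/
import Mathlib

section
/- Let f : (0,∞) → ℝ be strictly convex and continuous, extended by f(0) := lim_{t→0⁺} f(t) ∈ ℝ ∪ {∞}, with f(1) = 0. Fix p ∈ Δ_C⁺. Then: (a) for every v ∈ ℝ^C the function q ↦ D_f(q‖p) − vᵀq has a unique minimizer q_f^conj(v, p) over Δ_C; and (b) the function v ↦ D_f^conj(v, p) is differentiable at every v ∈ ℝ^C, with gradient ∇_v D_f^conj(v, p) = q_f^conj(v, p); in particular, the gradient is a probability vector in Δ_C. -/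
open Filter Set Topology

/-- The probability simplex in `ℝ^C`. -/
def simplex (C : ℕ) : Set (Fin C → ℝ) := {q | (∀ c, 0 ≤ q c) ∧ ∑ c, q c = 1}

/-- The (possibly infinite-valued) f-divergence `D_f(q‖p) = ∑_c p_c f(q_c/p_c)`,
where terms with `q_c = 0` receive the (possibly infinite) extension value
`f0 = f(0)`. -/
noncomputable def fDivE {C : ℕ} (f : ℝ → ℝ) (f0 : EReal) (q p : Fin C → ℝ) :
    EReal :=
  ∑ c, if q c = 0 then (p c : EReal) * f0 else ((p c * f (q c / p c) : ℝ) : EReal)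

/-- The convex conjugate `D_f^conj(v, p) = sup_{q ∈ Δ_C} (vᵀq − D_f(q‖p))`, as a
real number (the supremum being computed in the extended reals). -/
noncomputable def fDivConjE {C : ℕ} (f : ℝ → ℝ) (f0 : EReal) (v p : Fin C → ℝ) :
    ℝ :=
  (sSup ((fun q => ((∑ c, v c * q c : ℝ) : EReal) - fDivE f f0 q p) ''
    simplex C)).toReal

noncomputable def eterm (f : ℝ → ℝ) (f0 : EReal) (pc t : ℝ) : EReal :=
  if t = 0 then (pc : EReal) * f0 else ((pc * f (t / pc) : ℝ) : EReal)

section Real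

variable {f : ℝ → ℝ} {r : ℝ}

/-- limit form of convexity with left endpoint 0 -/
lemma midpoint_le_limit (hconv : ConvexOn ℝ (Set.Ioi 0) f)
    (hr : Tendsto f (𝓝[>] (0:ℝ)) (𝓝 r)) {s : ℝ} (hs : 0 < s) :
    f (s / 2) ≤ (r + f s) / 2 := by
  set g : ℝ → ℝ := fun t => (s/2)/(s-t) * f t + (1 - (s/2)/(s-t)) * f s with hg
  have hev : ∀ᶠ t in 𝓝[>] (0:ℝ), f (s/2) ≤ g t := by
    filter_upwards [Ioo_mem_nhdsGT_of_mem ⟨le_refl (0:ℝ), half_pos hs⟩] with t ht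
    obtain ⟨ht0, hts⟩ := ht
    have hst : s/2 < s - t := by linarith
    have hst0 : (0:ℝ) < s - t := by linarith
    have hμ0 : 0 < (s/2)/(s-t) := div_pos (half_pos hs) hst0
    have hμ1 : (s/2)/(s-t) < 1 := (div_lt_one hst0).2 hst
    have hcomb : (s/2)/(s-t) * t + (1 - (s/2)/(s-t)) * s = s/2 := by
      field_simp
      ring
    have := hconv.2 (mem_Ioi.2 ht0) (mem_Ioi.2 hs) (le_of_lt hμ0)
      (by linarith : (0:ℝ) ≤ 1 - (s/2)/(s-t)) (by ring)
    simpa [smul_eq_mul, hcomb, hg] using this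
  have hten : Tendsto g (𝓝[>] (0:ℝ)) (𝓝 ((r + f s)/2)) := by
    have hμ : Tendsto (fun t => (s/2)/(s-t)) (𝓝[>] (0:ℝ)) (𝓝 (1/2)) := by
      have : Tendsto (fun t : ℝ => (s/2)/(s-t)) (𝓝 (0:ℝ)) (𝓝 ((s/2)/(s-0))) := by
        apply Tendsto.div tendsto_const_nhds
        · exact (continuous_const.sub continuous_id).tendsto 0
        · simpa using hs.ne'
      have h2 : (s/2)/(s-0) = 1/2 := by
        rw [sub_zero, div_div, div_eq_iff (by positivity)]
        ring
      rw [h2] at this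
      exact this.mono_left nhdsWithin_le_nhds
    have hten2 : Tendsto (fun t => (s/2)/(s-t) * f t + (1 - (s/2)/(s-t)) * f s)
        (𝓝[>] (0:ℝ)) (𝓝 ((1/2) * r + (1 - 1/2) * f s)) :=
      (hμ.mul hr).add ((tendsto_const_nhds.sub hμ).mul tendsto_const_nhds)
    have he : (1/2) * r + (1 - 1/2 : ℝ) * f s = (r + f s)/2 := by ring
    rw [he] at hten2; exact hten2
  exact ge_of_tendsto hten hev

lemma midpoint_lt_limit (hf : StrictConvexOn ℝ (Set.Ioi 0) f)
    (hr : Tendsto f (𝓝[>] (0:ℝ)) (𝓝 r)) {s : ℝ} (hs : 0 < s) :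
    f (s / 2) < (r + f s) / 2 := by
  have h2 : f (s/4) ≤ (r + f (s/2))/2 := by
    have := midpoint_le_limit hf.convexOn hr (half_pos hs)
    simpa [show s/2/2 = s/4 by ring] using this
  have h1 : f (s/2) < (f (s/4) + f (3*s/4))/2 := by
    have := hf.2 (mem_Ioi.2 (by linarith : (0:ℝ) < s/4)) (mem_Ioi.2 (by linarith : (0:ℝ) < 3*s/4))
      (by intro h; linarith : (s/4 : ℝ) ≠ 3*s/4) (by norm_num : (0:ℝ) < (1:ℝ)/2)
      (by norm_num : (0:ℝ) < (1:ℝ)/2) (by norm_num)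
    have hmid : (1/2 : ℝ) • (s/4) + (1/2 : ℝ) • (3*s/4) = s/2 := by
      simp [smul_eq_mul]; ring
    rw [hmid] at this
    simp only [smul_eq_mul] at this
    linarith [this]
  have h3 : f (3*s/4) < (f (s/2) + f s)/2 := by
    have := hf.2 (mem_Ioi.2 (half_pos hs)) (mem_Ioi.2 hs)
      (by intro h; linarith : (s/2 : ℝ) ≠ s) (by norm_num : (0:ℝ) < (1:ℝ)/2)
      (by norm_num : (0:ℝ) < (1:ℝ)/2) (by norm_num)
    have hmid : (1/2 : ℝ) • (s/2) + (1/2 : ℝ) • s = 3*s/4 := by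
      simp [smul_eq_mul]; ring
    rw [hmid] at this
    simp only [smul_eq_mul] at this
    linarith [this]
  linarith

/-- strict midpoint inequality for positive points -/
lemma midpoint_lt_pos (hf : StrictConvexOn ℝ (Set.Ioi 0) f) {x y : ℝ}
    (hx : 0 < x) (hy : 0 < y) (hxy : x ≠ y) :
    f ((x + y)/2) < (f x + f y)/2 := by
  have := hf.2 (mem_Ioi.2 hx) (mem_Ioi.2 hy) hxy (by norm_num : (0:ℝ) < (1:ℝ)/2)
    (by norm_num : (0:ℝ) < (1:ℝ)/2) (by norm_num)
  have hmid : (1/2 : ℝ) • x + (1/2 : ℝ) • y = (x+y)/2 := by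
    simp [smul_eq_mul]; ring
  rw [hmid] at this
  simp only [smul_eq_mul] at this
  linarith

end Real

variable {f : ℝ → ℝ} {f0 : EReal} {pc : ℝ}

section Eterm
lemma eterm_zero : eterm f f0 pc 0 = (pc : EReal) * f0 := if_pos rfl

lemma eterm_of_ne {t : ℝ} (ht : t ≠ 0) :
    eterm f f0 pc t = ((pc * f (t / pc) : ℝ) : EReal) := if_neg ht

lemma eterm_ne_bot (hpc : 0 < pc) (hb : f0 ≠ ⊥) (t : ℝ) : eterm f f0 pc t ≠ ⊥ := by
  rcases eq_or_ne t 0 with h | h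
  · rw [h, eterm_zero]
    induction f0 with
    | bot => exact absurd rfl hb
    | coe r => rw [← EReal.coe_mul]; exact EReal.coe_ne_bot _
    | top => rw [EReal.coe_mul_top_of_pos hpc]; simp
  · rw [eterm_of_ne h]; exact EReal.coe_ne_bot _

lemma eterm_ne_top_pos (hpc : 0 < pc) {t : ℝ} (ht : t ≠ 0) : eterm f f0 pc t ≠ ⊤ := by
  rw [eterm_of_ne ht]; exact EReal.coe_ne_top _

/-- the asymmetric `a = 0` case of strict midpoint convexity -/
private lemma eterm_midpoint_lt_zero
    (hf : StrictConvexOn ℝ (Set.Ioi 0) f)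
    (hf0 : Tendsto (fun t => ((f t : ℝ) : EReal)) (𝓝[>] (0:ℝ)) (𝓝 f0))
    (hf0b : f0 ≠ ⊥) (hpc : 0 < pc) {b : ℝ} (hb : 0 < b)
    (hna : eterm f f0 pc 0 ≠ ⊤) :
    eterm f f0 pc ((0 + b) / 2) <
      ((((eterm f f0 pc 0).toReal + (eterm f f0 pc b).toReal) / 2 : ℝ) : EReal) := by
  have hf0top : f0 ≠ ⊤ := by
    intro h
    rw [eterm_zero, h, EReal.coe_mul_top_of_pos hpc] at hna
    exact hna rfl
  set r : ℝ := f0.toReal with hr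
  have hf0eq : f0 = (r : EReal) := (EReal.coe_toReal hf0top hf0b).symm
  rw [hf0eq] at hf0
  have hreal : Tendsto f (𝓝[>] (0:ℝ)) (𝓝 r) := EReal.tendsto_coe.1 hf0
  have h0 : (eterm f f0 pc 0).toReal = pc * r := by
    rw [eterm_zero, hf0eq, ← EReal.coe_mul, EReal.toReal_coe]
  have hbv : (eterm f f0 pc b).toReal = pc * f (b / pc) := by
    rw [eterm_of_ne hb.ne', EReal.toReal_coe]
  have hmid : (0 + b) / 2 = b / 2 := by ring
  have hmidne : b / 2 ≠ 0 := (half_pos hb).ne'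
  rw [hmid, eterm_of_ne hmidne, h0, hbv, EReal.coe_lt_coe_iff]
  have hs : 0 < b / pc := div_pos hb hpc
  have key := midpoint_lt_limit hf hreal hs
  have harg : (b / 2) / pc = (b / pc) / 2 := by ring
  rw [harg]
  nlinarith [key, hpc]

lemma eterm_midpoint_lt
    (hf : StrictConvexOn ℝ (Set.Ioi 0) f)
    (hf0 : Tendsto (fun t => ((f t : ℝ) : EReal)) (𝓝[>] (0:ℝ)) (𝓝 f0))
    (hf0b : f0 ≠ ⊥) (hpc : 0 < pc) {a b : ℝ} (ha : 0 ≤ a) (hb : 0 ≤ b)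
    (hna : eterm f f0 pc a ≠ ⊤) (hnb : eterm f f0 pc b ≠ ⊤) (hab : a ≠ b) :
    eterm f f0 pc ((a + b) / 2) <
      ((((eterm f f0 pc a).toReal + (eterm f f0 pc b).toReal) / 2 : ℝ) : EReal) := by
  rcases ha.eq_or_lt with rfl | ha0
  · exact eterm_midpoint_lt_zero hf hf0 hf0b hpc (hb.lt_of_ne (Ne.symm (Ne.symm hab))) hna
  rcases hb.eq_or_lt with rfl | hb0
  · have := eterm_midpoint_lt_zero hf hf0 hf0b hpc ha0 hnb
    have h1 : (a + 0) / 2 = (0 + a) / 2 := by ring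
    rw [h1, add_comm ((eterm f f0 pc a).toReal)]
    exact this
  · rw [eterm_of_ne ha0.ne', eterm_of_ne hb0.ne',
      eterm_of_ne (by positivity : (a + b) / 2 ≠ 0), EReal.toReal_coe, EReal.toReal_coe,
      EReal.coe_lt_coe_iff]
    have hxy : a / pc ≠ b / pc := by
      intro h
      rw [div_eq_div_iff hpc.ne' hpc.ne'] at h
      exact hab (mul_right_cancel₀ hpc.ne' h)
    have key := midpoint_lt_pos hf (div_pos ha0 hpc) (div_pos hb0 hpc) hxy
    have harg : ((a + b) / 2) / pc = (a / pc + b / pc) / 2 := by ring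
    rw [harg]
    nlinarith [key, hpc]

lemma eterm_midpoint_le
    (hf : StrictConvexOn ℝ (Set.Ioi 0) f)
    (hf0 : Tendsto (fun t => ((f t : ℝ) : EReal)) (𝓝[>] (0:ℝ)) (𝓝 f0))
    (hf0b : f0 ≠ ⊥) (hpc : 0 < pc) {a b : ℝ} (ha : 0 ≤ a) (hb : 0 ≤ b)
    (hna : eterm f f0 pc a ≠ ⊤) (hnb : eterm f f0 pc b ≠ ⊤) :
    eterm f f0 pc ((a + b) / 2) ≤
      ((((eterm f f0 pc a).toReal + (eterm f f0 pc b).toReal) / 2 : ℝ) : EReal) := by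
  rcases eq_or_ne a b with hab | hab
  · subst hab
    rw [show (a + a) / 2 = a by ring, show ((eterm f f0 pc a).toReal +
      (eterm f f0 pc a).toReal) / 2 = (eterm f f0 pc a).toReal by ring,
      EReal.coe_toReal hna (eterm_ne_bot hpc hf0b a)]
  · exact (eterm_midpoint_lt hf hf0 hf0b hpc ha hb hna hnb hab).le

lemma eterm_continuousOn (hf_cont : ContinuousOn f (Set.Ioi 0))
    (hf0 : Tendsto (fun t => ((f t : ℝ) : EReal)) (𝓝[>] (0:ℝ)) (𝓝 f0))
    (hpc : 0 < pc) : ContinuousOn (eterm f f0 pc) (Set.Ici 0) := by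
  intro t ht
  rcases (mem_Ici.1 ht).eq_or_lt with ht0 | ht0
  · subst ht0
    rw [ContinuousWithinAt, eterm_zero, ← Set.Ioi_insert, nhdsWithin_insert,
      Filter.tendsto_sup]
    constructor
    · have : eterm f f0 pc 0 = (pc : EReal) * f0 := eterm_zero
      simpa [this] using tendsto_pure_nhds (eterm f f0 pc) 0
    · have hmap : Tendsto (fun u : ℝ => u / pc) (𝓝[>] (0:ℝ)) (𝓝[>] (0:ℝ)) := by
        apply tendsto_nhdsWithin_of_tendsto_nhds_of_eventually_within
        · have : Tendsto (fun u : ℝ => u / pc) (𝓝 (0:ℝ)) (𝓝 (0 / pc)) :=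
            (continuous_id.div_const pc).tendsto 0
          rw [zero_div] at this
          exact this.mono_left nhdsWithin_le_nhds
        · filter_upwards [self_mem_nhdsWithin] with u hu
          exact div_pos hu hpc
      have hinner : Tendsto (fun u : ℝ => ((f (u / pc) : ℝ) : EReal))
          (𝓝[>] (0:ℝ)) (𝓝 f0) := hf0.comp hmap
      have hmulc : ContinuousAt (fun q : EReal × EReal => q.1 * q.2) ((pc : EReal), f0) :=
        EReal.continuousAt_mul
          (Or.inl (show ((pc : ℝ) : EReal) ≠ 0 by exact_mod_cast hpc.ne'))
          (Or.inl (show ((pc : ℝ) : EReal) ≠ 0 by exact_mod_cast hpc.ne'))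
          (Or.inl (EReal.coe_ne_bot _)) (Or.inl (EReal.coe_ne_top _))
      have hpair : Tendsto (fun u : ℝ => (((pc : ℝ) : EReal), ((f (u / pc) : ℝ) : EReal)))
          (𝓝[>] (0:ℝ)) (𝓝 (((pc : ℝ) : EReal), f0)) :=
        tendsto_const_nhds.prodMk_nhds hinner
      have hg : Tendsto (fun u : ℝ => ((pc : ℝ) : EReal) * ((f (u / pc) : ℝ) : EReal))
          (𝓝[>] (0:ℝ)) (𝓝 ((pc : EReal) * f0)) := hmulc.tendsto.comp hpair
      apply hg.congr'
      filter_upwards [self_mem_nhdsWithin] with u hu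
      rw [← EReal.coe_mul, ← eterm_of_ne (ne_of_gt hu)]
  · apply ContinuousAt.continuousWithinAt
    have hev : (fun u => ((pc * f (u / pc) : ℝ) : EReal)) =ᶠ[𝓝 t] eterm f f0 pc := by
      filter_upwards [isOpen_Ioi.mem_nhds (mem_Ioi.2 ht0)] with u hu
      rw [eterm_of_ne (ne_of_gt hu)]
    apply ContinuousAt.congr _ hev
    have hdiv : ContinuousAt (fun u : ℝ => u / pc) t := continuousAt_id.div_const pc
    have hf' : ContinuousAt f (t / pc) :=
      hf_cont.continuousAt (isOpen_Ioi.mem_nhds (mem_Ioi.2 (div_pos ht0 hpc)))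
    have h1 : ContinuousAt (fun u : ℝ => f (u / pc)) t := Filter.Tendsto.comp hf' hdiv
    have h2 : ContinuousAt (fun u : ℝ => pc * f (u / pc)) t := continuousAt_const.mul h1
    exact continuous_coe_real_ereal.continuousAt.comp h2

end Eterm



/-! ### generic EReal sum helpers -/

lemma ereal_sum_ne_bot {ι : Type*} (s : Finset ι) (g : ι → EReal)
    (h : ∀ i ∈ s, g i ≠ ⊥) : ∑ i ∈ s, g i ≠ ⊥ := by
  classical
  induction s using Finset.induction_on with
  | empty => simp
  | insert a s hni ih =>
    rw [Finset.sum_insert hni, ne_eq, EReal.add_eq_bot_iff]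
    push_neg
    exact ⟨h a (Finset.mem_insert_self a s), ih fun i hi => h i (Finset.mem_insert_of_mem hi)⟩

lemma ereal_sum_eq_top {ι : Type*} (s : Finset ι) (g : ι → EReal)
    (h : ∀ i ∈ s, g i ≠ ⊥) {i : ι} (hi : i ∈ s) (htop : g i = ⊤) :
    ∑ j ∈ s, g j = ⊤ := by
  classical
  rw [← Finset.add_sum_erase s g hi, htop]
  exact EReal.top_add_of_ne_bot (ereal_sum_ne_bot _ _ fun j hj => h j (Finset.mem_of_mem_erase hj))

lemma ereal_coe_sum {ι : Type*} (s : Finset ι) (g : ι → ℝ) :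
    ((∑ i ∈ s, g i : ℝ) : EReal) = ∑ i ∈ s, ((g i : ℝ) : EReal) := by
  classical
  induction s using Finset.induction_on with
  | empty => simp
  | insert a s hni ih =>
    rw [Finset.sum_insert hni, Finset.sum_insert hni, EReal.coe_add, ih]

lemma ContinuousWithinAt.ereal_add {X : Type*} [TopologicalSpace X] {A : Set X} {x : X}
    {φ ψ : X → EReal} (hφ : ContinuousWithinAt φ A x) (hψ : ContinuousWithinAt ψ A x)
    (h1 : φ x ≠ ⊤ ∨ ψ x ≠ ⊥) (h2 : φ x ≠ ⊥ ∨ ψ x ≠ ⊤) :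
    ContinuousWithinAt (fun y => φ y + ψ y) A x :=
  (EReal.continuousAt_add (p := (φ x, ψ x)) h1 h2).comp_continuousWithinAt (f := fun y => (φ y, ψ y)) (x := x)
    (ContinuousWithinAt.prodMk hφ hψ)

lemma continuousOn_ereal_sum {X : Type*} [TopologicalSpace X] {A : Set X} {ι : Type*}
    (s : Finset ι) (g : ι → X → EReal) (hc : ∀ i ∈ s, ContinuousOn (g i) A)
    (hb : ∀ i ∈ s, ∀ x ∈ A, g i x ≠ ⊥) :
    ContinuousOn (fun x => ∑ i ∈ s, g i x) A := by
  classical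
  induction s using Finset.induction_on with
  | empty => simp; exact continuousOn_const
  | insert a s hni ih =>
    have h1 : ContinuousOn (fun x => g a x + ∑ i ∈ s, g i x) A := by
      intro x hx
      refine ContinuousWithinAt.ereal_add
        (hc a (Finset.mem_insert_self a s) x hx)
        (ih (fun i hi => hc i (Finset.mem_insert_of_mem hi))
          (fun i hi => hb i (Finset.mem_insert_of_mem hi)) x hx) ?_ ?_
      · exact Or.inr (ereal_sum_ne_bot _ _ fun i hi => hb i (Finset.mem_insert_of_mem hi) x hx)
      · exact Or.inl (hb a (Finset.mem_insert_self a s) x hx)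
    intro x hx
    have := h1 x hx
    simpa [Finset.sum_insert hni] using this

/-! ### the divergence sum -/

section Fsum

variable {C : ℕ} {f : ℝ → ℝ} {f0 : EReal} {p : Fin C → ℝ} {v : Fin C → ℝ}

noncomputable def Fsum (f : ℝ → ℝ) (f0 : EReal) (p : Fin C → ℝ) (q : Fin C → ℝ) : EReal :=
  ∑ c, eterm f f0 (p c) (q c)

/-- the objective to be minimized, as in the theorem statement -/
noncomputable def Hobj (f : ℝ → ℝ) (f0 : EReal) (p v : Fin C → ℝ) (q : Fin C → ℝ) : EReal :=
  Fsum f f0 p q - ((∑ c, v c * q c : ℝ) : EReal)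

lemma Fsum_ne_bot (hp : ∀ c, 0 < p c) (hb : f0 ≠ ⊥) (q : Fin C → ℝ) :
    Fsum f f0 p q ≠ ⊥ :=
  ereal_sum_ne_bot _ _ fun c _ => eterm_ne_bot (hp c) hb (q c)

lemma Hobj_ne_bot (hp : ∀ c, 0 < p c) (hb : f0 ≠ ⊥) (q : Fin C → ℝ) :
    Hobj f f0 p v q ≠ ⊥ := by
  rw [Hobj, sub_eq_add_neg, ← EReal.coe_neg, ne_eq, EReal.add_eq_bot_iff]
  push_neg
  exact ⟨Fsum_ne_bot hp hb q, EReal.coe_ne_bot _⟩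

lemma Fsum_self (hp : ∀ c, 0 < p c) (hf_one : f 1 = 0) : Fsum f f0 p p = 0 := by
  rw [Fsum]
  have : ∀ c : Fin C, eterm f f0 (p c) (p c) = (0 : EReal) := by
    intro c
    rw [eterm_of_ne (hp c).ne', div_self (hp c).ne', hf_one, mul_zero, EReal.coe_zero]
  simp [this]

lemma Hobj_self (hp : ∀ c, 0 < p c) (hf_one : f 1 = 0) :
    Hobj f f0 p v p = ((-(∑ c, v c * p c) : ℝ) : EReal) := by
  rw [Hobj, Fsum_self hp hf_one]
  rw [show ((-(∑ c, v c * p c) : ℝ) : EReal) = 0 - ((∑ c, v c * p c : ℝ) : EReal) by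
    rw [EReal.coe_neg, zero_sub]]

lemma Fsum_continuousOn (hf_cont : ContinuousOn f (Set.Ioi 0))
    (hf0 : Tendsto (fun t => ((f t : ℝ) : EReal)) (𝓝[>] (0:ℝ)) (𝓝 f0))
    (hp : ∀ c, 0 < p c) (hb : f0 ≠ ⊥) :
    ContinuousOn (Fsum f f0 p) {q : Fin C → ℝ | ∀ c, 0 ≤ q c} := by
  apply continuousOn_ereal_sum
  · intro c _
    have h1 : ContinuousOn (fun q : Fin C → ℝ => q c) {q : Fin C → ℝ | ∀ c, 0 ≤ q c} :=
      (continuous_apply c).continuousOn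
    have hmaps : Set.MapsTo (fun q : Fin C → ℝ => q c) {q : Fin C → ℝ | ∀ c, 0 ≤ q c}
        (Set.Ici 0) := fun q hq => hq c
    exact (eterm_continuousOn hf_cont hf0 (hp c)).comp h1 hmaps
  · intro c _ q _
    exact eterm_ne_bot (hp c) hb (q c)

lemma Hobj_continuousOn (hf_cont : ContinuousOn f (Set.Ioi 0))
    (hf0 : Tendsto (fun t => ((f t : ℝ) : EReal)) (𝓝[>] (0:ℝ)) (𝓝 f0))
    (hp : ∀ c, 0 < p c) (hb : f0 ≠ ⊥) :
    ContinuousOn (Hobj f f0 p v) {q : Fin C → ℝ | ∀ c, 0 ≤ q c} := by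
  have hlin : Continuous (fun q : Fin C → ℝ => ((-(∑ c, v c * q c) : ℝ) : EReal)) := by
    apply continuous_coe_real_ereal.comp
    exact (continuous_finset_sum _ fun c _ => (continuous_const.mul (continuous_apply c))).neg
  intro q hq
  have h1 : ContinuousWithinAt (fun q : Fin C → ℝ =>
      Fsum f f0 p q + ((-(∑ c, v c * q c) : ℝ) : EReal))
      {q : Fin C → ℝ | ∀ c, 0 ≤ q c} q := by
    refine ContinuousWithinAt.ereal_add (Fsum_continuousOn hf_cont hf0 hp hb q hq)
      (hlin.continuousWithinAt) ?_ ?_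
    · exact Or.inr (EReal.coe_ne_bot _)
    · exact Or.inl (Fsum_ne_bot hp hb q)
  apply h1.congr
  · intro q' _
    rw [Hobj, sub_eq_add_neg, EReal.coe_neg]
  · rw [Hobj, sub_eq_add_neg, EReal.coe_neg]

/-! ### simplex facts -/

lemma simplex_isClosed (C : ℕ) : IsClosed (simplex C) := by
  have : simplex C = (⋂ c, {q : Fin C → ℝ | 0 ≤ q c}) ∩ {q : Fin C → ℝ | ∑ c, q c = 1} := by
    ext q; simp [simplex, Set.mem_iInter]
  rw [this]
  exact (isClosed_iInter fun c => isClosed_le continuous_const (continuous_apply c)).inter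
    (isClosed_eq (continuous_finset_sum _ fun c _ => continuous_apply c) continuous_const)

lemma simplex_isCompact (C : ℕ) : IsCompact (simplex C) := by
  apply (isCompact_Icc (a := (0 : Fin C → ℝ)) (b := 1)).of_isClosed_subset (simplex_isClosed C)
  intro q hq
  obtain ⟨hq0, hq1⟩ := hq
  constructor
  · intro c; exact hq0 c
  · intro c
    have : q c ≤ ∑ c', q c' := Finset.single_le_sum (fun c' _ => hq0 c') (Finset.mem_univ c)
    rw [hq1] at this
    exact this

lemma mem_simplex_self (hp : ∀ c, 0 < p c) (hs : ∑ c, p c = 1) : p ∈ simplex C :=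
  ⟨fun c => (hp c).le, hs⟩

lemma simplex_subset_nonneg (C : ℕ) : simplex C ⊆ {q : Fin C → ℝ | ∀ c, 0 ≤ q c} :=
  fun _ hq => hq.1

/-! ### existence of a minimizer -/

lemma exists_min (hf_cont : ContinuousOn f (Set.Ioi 0))
    (hf0 : Tendsto (fun t => ((f t : ℝ) : EReal)) (𝓝[>] (0:ℝ)) (𝓝 f0))
    (hp : ∀ c, 0 < p c) (hs : ∑ c, p c = 1) (hb : f0 ≠ ⊥) (v : Fin C → ℝ) :
    ∃ q ∈ simplex C, IsMinOn (Hobj f f0 p v) (simplex C) q :=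
  (simplex_isCompact C).exists_isMinOn ⟨p, mem_simplex_self hp hs⟩
    ((Hobj_continuousOn hf_cont hf0 hp hb).mono (simplex_subset_nonneg C))

/-! ### finiteness of the minimum -/

lemma min_ne_top (hp : ∀ c, 0 < p c) (hs : ∑ c, p c = 1) (hf_one : f 1 = 0)
    {q : Fin C → ℝ} (hmin : IsMinOn (Hobj f f0 p v) (simplex C) q) :
    Hobj f f0 p v q ≠ ⊤ := by
  have h : Hobj f f0 p v q ≤ Hobj f f0 p v p := hmin (mem_simplex_self hp hs)
  rw [Hobj_self hp hf_one] at h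
  exact ne_top_of_le_ne_top (EReal.coe_ne_top _) h

lemma Fsum_ne_top_of_min (hp : ∀ c, 0 < p c) (hs : ∑ c, p c = 1) (hf_one : f 1 = 0)
    {q : Fin C → ℝ} (hmin : IsMinOn (Hobj f f0 p v) (simplex C) q) :
    Fsum f f0 p q ≠ ⊤ := by
  intro htop
  apply min_ne_top hp hs hf_one hmin
  rw [Hobj, htop]
  rfl

/-! ### uniqueness -/

lemma min_value_eq (hp : ∀ c, 0 < p c) (hb : f0 ≠ ⊥) {q : Fin C → ℝ}
    (hFt : Fsum f f0 p q ≠ ⊤) :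
    Hobj f f0 p v q = (((Fsum f f0 p q).toReal - ∑ c, v c * q c : ℝ) : EReal) := by
  rw [Hobj, EReal.coe_sub]
  congr 1
  exact (EReal.coe_toReal hFt (Fsum_ne_bot hp hb q)).symm

lemma min_unique
    (hf : StrictConvexOn ℝ (Set.Ioi 0) f)
    (hf0 : Tendsto (fun t => ((f t : ℝ) : EReal)) (𝓝[>] (0:ℝ)) (𝓝 f0))
    (hb : f0 ≠ ⊥) (hp : ∀ c, 0 < p c) (hs : ∑ c, p c = 1) (hf_one : f 1 = 0)
    {q1 q2 : Fin C → ℝ} (h1m : q1 ∈ simplex C) (h2m : q2 ∈ simplex C)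
    (h1 : IsMinOn (Hobj f f0 p v) (simplex C) q1)
    (h2 : IsMinOn (Hobj f f0 p v) (simplex C) q2) : q1 = q2 := by
  classical
  by_contra hne
  obtain ⟨c0, hc0⟩ : ∃ c, q1 c ≠ q2 c := Function.ne_iff.1 hne
  -- finiteness
  have hF1t : Fsum f f0 p q1 ≠ ⊤ := Fsum_ne_top_of_min hp hs hf_one h1
  have hF2t : Fsum f f0 p q2 ≠ ⊤ := Fsum_ne_top_of_min hp hs hf_one h2
  have hterm1 : ∀ c : Fin C, eterm f f0 (p c) (q1 c) ≠ ⊤ := by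
    intro c htop
    exact hF1t (ereal_sum_eq_top _ _ (fun i _ => eterm_ne_bot (hp i) hb (q1 i))
      (Finset.mem_univ c) htop)
  have hterm2 : ∀ c : Fin C, eterm f f0 (p c) (q2 c) ≠ ⊤ := by
    intro c htop
    exact hF2t (ereal_sum_eq_top _ _ (fun i _ => eterm_ne_bot (hp i) hb (q2 i))
      (Finset.mem_univ c) htop)
  -- the midpoint
  set qm : Fin C → ℝ := fun c => (q1 c + q2 c) / 2 with hqm
  have hqmmem : qm ∈ simplex C := by
    constructor
    · intro c
      have := h1m.1 c
      have := h2m.1 c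
      positivity
    · rw [hqm]
      simp only
      rw [← Finset.sum_div, Finset.sum_add_distrib, h1m.2, h2m.2]
      norm_num
  -- term bounds
  set B : Fin C → ℝ := fun c =>
    ((eterm f f0 (p c) (q1 c)).toReal + (eterm f f0 (p c) (q2 c)).toReal) / 2 with hB
  have hstep1 : ∑ c ∈ Finset.univ.erase c0, eterm f f0 (p c) (qm c)
      ≤ ∑ c ∈ Finset.univ.erase c0, ((B c : ℝ) : EReal) := by
    apply Finset.sum_le_sum
    intro c _
    exact eterm_midpoint_le hf hf0 hb (hp c) (h1m.1 c) (h2m.1 c) (hterm1 c) (hterm2 c)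
  have hstep2 : eterm f f0 (p c0) (qm c0) < ((B c0 : ℝ) : EReal) :=
    eterm_midpoint_lt hf hf0 hb (hp c0) (h1m.1 c0) (h2m.1 c0) (hterm1 c0) (hterm2 c0) hc0
  have hFlt : Fsum f f0 p qm < ((∑ c, B c : ℝ) : EReal) := by
    have hrhs : ((∑ c, B c : ℝ) : EReal)
        = ((B c0 : ℝ) : EReal) + ((∑ c ∈ Finset.univ.erase c0, B c : ℝ) : EReal) := by
      rw [← EReal.coe_add, ← Finset.add_sum_erase Finset.univ B (Finset.mem_univ c0)]
    rw [Fsum, ← Finset.add_sum_erase Finset.univ _ (Finset.mem_univ c0), hrhs]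
    apply EReal.add_lt_add_of_lt_of_le hstep2 _
      (ereal_sum_ne_bot _ _ fun c _ => eterm_ne_bot (hp c) hb (qm c)) (EReal.coe_ne_top _)
    rw [ereal_coe_sum]
    exact hstep1
  -- values
  have hmv : Hobj f f0 p v q1 = Hobj f f0 p v q2 := le_antisymm (h1 h2m) (h2 h1m)
  have hsum1 : Fsum f f0 p q1 = ((∑ c, (eterm f f0 (p c) (q1 c)).toReal : ℝ) : EReal) := by
    rw [Fsum, ereal_coe_sum]
    exact Finset.sum_congr rfl fun c _ =>
      (EReal.coe_toReal (hterm1 c) (eterm_ne_bot (hp c) hb _)).symm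
  have hsum2 : Fsum f f0 p q2 = ((∑ c, (eterm f f0 (p c) (q2 c)).toReal : ℝ) : EReal) := by
    rw [Fsum, ereal_coe_sum]
    exact Finset.sum_congr rfl fun c _ =>
      (EReal.coe_toReal (hterm2 c) (eterm_ne_bot (hp c) hb _)).symm
  have hFr1 : (Fsum f f0 p q1).toReal = ∑ c, (eterm f f0 (p c) (q1 c)).toReal := by
    rw [hsum1, EReal.toReal_coe]
  have hFr2 : (Fsum f f0 p q2).toReal = ∑ c, (eterm f f0 (p c) (q2 c)).toReal := by
    rw [hsum2, EReal.toReal_coe]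
  have hsB : ∑ c, B c = ((Fsum f f0 p q1).toReal + (Fsum f f0 p q2).toReal) / 2 := by
    rw [hFr1, hFr2, ← Finset.sum_add_distrib, Finset.sum_div]
  have hlin : ∑ c, v c * qm c = ((∑ c, v c * q1 c) + (∑ c, v c * q2 c)) / 2 := by
    rw [← Finset.sum_add_distrib, Finset.sum_div]
    exact Finset.sum_congr rfl fun c _ => by rw [hqm]; ring
  have hH1 : Hobj f f0 p v q1
      = (((Fsum f f0 p q1).toReal - ∑ c, v c * q1 c : ℝ) : EReal) := min_value_eq hp hb hF1t
  have hH2 : Hobj f f0 p v q2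
      = (((Fsum f f0 p q2).toReal - ∑ c, v c * q2 c : ℝ) : EReal) := min_value_eq hp hb hF2t
  have hreq : (Fsum f f0 p q1).toReal - ∑ c, v c * q1 c
      = (Fsum f f0 p q2).toReal - ∑ c, v c * q2 c := by
    have := hmv
    rw [hH1, hH2] at this
    exact_mod_cast this
  have hend : Hobj f f0 p v qm < Hobj f f0 p v q1 := by
    have hstep : Hobj f f0 p v qm < ((∑ c, B c : ℝ) : EReal) - ((∑ c, v c * qm c : ℝ) : EReal) := by
      rw [Hobj]
      rw [sub_eq_add_neg, sub_eq_add_neg, ← EReal.coe_neg]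
      exact EReal.add_lt_add_right_coe hFlt _
    rw [← EReal.coe_sub] at hstep
    have heq : ∑ c, B c - ∑ c, v c * qm c
        = (Fsum f f0 p q1).toReal - ∑ c, v c * q1 c := by
      rw [hsB, hlin]
      linarith [hreq]
    rw [heq, ← hH1] at hstep
    exact hstep
  exact absurd (h1 hqmmem : Hobj f f0 p v q1 ≤ Hobj f f0 p v qm) (not_le.2 hend)

end Fsum

section Conj

variable {C : ℕ} {f : ℝ → ℝ} {f0 : EReal} {p : Fin C → ℝ} {v w w' : Fin C → ℝ}

noncomputable def Gobj (f : ℝ → ℝ) (f0 : EReal) (p w : Fin C → ℝ) (q : Fin C → ℝ) : EReal :=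
  ((∑ c, w c * q c : ℝ) : EReal) - Fsum f f0 p q

lemma Gobj_neg (hp : ∀ c, 0 < p c) (hb : f0 ≠ ⊥) (q : Fin C → ℝ) :
    Gobj f f0 p w q = -(Hobj f f0 p w q) := by
  rw [Hobj, EReal.neg_sub (Or.inl (Fsum_ne_bot hp hb q)) (Or.inr (EReal.coe_ne_top _)),
    Gobj, sub_eq_add_neg, add_comm]

lemma isMaxOn_Gobj (hp : ∀ c, 0 < p c) (hb : f0 ≠ ⊥) {qw : Fin C → ℝ}
    (hmin : IsMinOn (Hobj f f0 p w) (simplex C) qw) :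
    IsMaxOn (Gobj f f0 p w) (simplex C) qw := by
  intro x hx
  have hle : Hobj f f0 p w qw ≤ Hobj f f0 p w x := hmin hx
  show Gobj f f0 p w x ≤ Gobj f f0 p w qw
  rw [Gobj_neg hp hb, Gobj_neg hp hb]
  exact EReal.neg_le_neg_iff.2 hle

lemma sSup_image_eq (hp : ∀ c, 0 < p c) (hb : f0 ≠ ⊥) {qw : Fin C → ℝ}
    (hmem : qw ∈ simplex C) (hmin : IsMinOn (Hobj f f0 p w) (simplex C) qw) :
    sSup (Gobj f f0 p w '' simplex C) = Gobj f f0 p w qw := by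
  apply IsGreatest.csSup_eq
  constructor
  · exact ⟨qw, hmem, rfl⟩
  · rintro x ⟨q, hq, rfl⟩
    exact isMaxOn_Gobj hp hb hmin hq

lemma fDivConjE_eq_sSup_Gobj :
    fDivConjE f f0 w p = (sSup (Gobj f f0 p w '' simplex C)).toReal := rfl

lemma Gobj_min_coe (hp : ∀ c, 0 < p c) (hs : ∑ c, p c = 1) (hf_one : f 1 = 0)
    (hb : f0 ≠ ⊥) {qw : Fin C → ℝ}
    (hmin : IsMinOn (Hobj f f0 p w) (simplex C) qw) :
    Gobj f f0 p w qw = ((-(Hobj f f0 p w qw).toReal : ℝ) : EReal) := by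
  rw [Gobj_neg hp hb, ← EReal.coe_toReal (min_ne_top hp hs hf_one hmin) (Hobj_ne_bot hp hb qw),
    ← EReal.coe_neg, EReal.toReal_coe]

lemma conj_coe (hp : ∀ c, 0 < p c) (hs : ∑ c, p c = 1) (hf_one : f 1 = 0)
    (hb : f0 ≠ ⊥) {qw : Fin C → ℝ}
    (hmem : qw ∈ simplex C) (hmin : IsMinOn (Hobj f f0 p w) (simplex C) qw) :
    ((fDivConjE f f0 w p : ℝ) : EReal) = Gobj f f0 p w qw := by
  rw [fDivConjE_eq_sSup_Gobj, sSup_image_eq hp hb hmem hmin,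
    Gobj_min_coe hp hs hf_one hb hmin, EReal.toReal_coe]

lemma sum_shift (q : Fin C → ℝ) :
    ∑ c, w' c * q c = (∑ c, w c * q c) + ∑ c, (w' c - w c) * q c := by
  rw [← Finset.sum_add_distrib]
  exact Finset.sum_congr rfl fun c _ => by ring

lemma Gobj_shift (q : Fin C → ℝ) :
    Gobj f f0 p w' q = Gobj f f0 p w q + ((∑ c, (w' c - w c) * q c : ℝ) : EReal) := by
  rw [Gobj, Gobj, sub_eq_add_neg, sub_eq_add_neg, add_right_comm]
  congr 1
  rw [← EReal.coe_add, EReal.coe_eq_coe_iff]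
  exact sum_shift q

lemma Hobj_shift (q : Fin C → ℝ) :
    Hobj f f0 p w q = Hobj f f0 p v q - ((∑ c, (w c - v c) * q c : ℝ) : EReal) := by
  rw [Hobj, Hobj, sub_eq_add_neg, sub_eq_add_neg, sub_eq_add_neg, add_assoc]
  congr 1
  rw [← EReal.coe_neg, ← EReal.coe_neg, ← EReal.coe_neg, ← EReal.coe_add,
    EReal.coe_eq_coe_iff]
  have := sum_shift (w := v) (w' := w) q
  linarith

/-- the fundamental subgradient inequality for the conjugate -/
lemma conj_lower (hf : StrictConvexOn ℝ (Set.Ioi 0) f)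
    (hf_cont : ContinuousOn f (Set.Ioi 0))
    (hf0 : Tendsto (fun t => ((f t : ℝ) : EReal)) (𝓝[>] (0:ℝ)) (𝓝 f0))
    (hb : f0 ≠ ⊥) (hp : ∀ c, 0 < p c) (hs : ∑ c, p c = 1) (hf_one : f 1 = 0)
    {qw : Fin C → ℝ} (hmem : qw ∈ simplex C)
    (hmin : IsMinOn (Hobj f f0 p w) (simplex C) qw) (w' : Fin C → ℝ) :
    fDivConjE f f0 w p + ∑ c, (w' c - w c) * qw c ≤ fDivConjE f f0 w' p := by
  obtain ⟨qw', hmem', hmin'⟩ := exists_min hf_cont hf0 hp hs hb w'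
  have h1 : Gobj f f0 p w' qw ≤ Gobj f f0 p w' qw' := isMaxOn_Gobj hp hb hmin' hmem
  rw [Gobj_shift (w := w) qw, ← conj_coe hp hs hf_one hb hmem hmin,
    ← conj_coe hp hs hf_one hb hmem' hmin', ← EReal.coe_add] at h1
  exact_mod_cast h1

lemma lin_bound {d q : Fin C → ℝ} (hq : q ∈ simplex C) {R : ℝ}
    (hR : ∀ c, |d c| ≤ R) : |∑ c, d c * q c| ≤ R := by
  calc |∑ c, d c * q c| ≤ ∑ c, |d c * q c| := Finset.abs_sum_le_sum_abs _ _
    _ ≤ ∑ c, R * q c := by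
        apply Finset.sum_le_sum
        intro c _
        rw [abs_mul, abs_of_nonneg (hq.1 c)]
        exact mul_le_mul_of_nonneg_right (hR c) (hq.1 c)
    _ = R := by rw [← Finset.mul_sum, hq.2, mul_one]

lemma dist_lin_bound {q : Fin C → ℝ} (hq : q ∈ simplex C) (w v : Fin C → ℝ) :
    |∑ c, (w c - v c) * q c| ≤ dist w v := by
  apply lin_bound hq
  intro c
  rw [← Real.dist_eq]
  exact dist_le_pi_dist w v c

/-- continuity of the (unique) argmin -/
lemma argmin_cont (hf : StrictConvexOn ℝ (Set.Ioi 0) f)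
    (hf_cont : ContinuousOn f (Set.Ioi 0))
    (hf0 : Tendsto (fun t => ((f t : ℝ) : EReal)) (𝓝[>] (0:ℝ)) (𝓝 f0))
    (hb : f0 ≠ ⊥) (hp : ∀ c, 0 < p c) (hs : ∑ c, p c = 1) (hf_one : f 1 = 0)
    {qv : Fin C → ℝ} (hqvmem : qv ∈ simplex C)
    (hqvmin : IsMinOn (Hobj f f0 p v) (simplex C) qv) {ε : ℝ} (hε : 0 < ε) :
    ∃ δ > 0, ∀ w : Fin C → ℝ, dist w v < δ → ∀ qw ∈ simplex C,
      IsMinOn (Hobj f f0 p w) (simplex C) qw → dist qw qv < ε := by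
  classical
  set K : Set (Fin C → ℝ) := simplex C ∩ {q | ε ≤ dist q qv} with hK
  rcases Set.eq_empty_or_nonempty K with hKe | hKne
  · refine ⟨1, one_pos, fun w _ qw hqwm _ => ?_⟩
    by_contra hcon
    push_neg at hcon
    have hmemK : qw ∈ K := ⟨hqwm, hcon⟩
    rw [hKe] at hmemK
    exact Set.notMem_empty qw hmemK
  · have hKcomp : IsCompact K := (simplex_isCompact C).inter_right
      (isClosed_le continuous_const (continuous_id.dist continuous_const))
    obtain ⟨z, hzK, hzmin⟩ := hKcomp.exists_isMinOn hKne
      ((Hobj_continuousOn hf_cont hf0 hp hb).mono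
        (fun q hq => simplex_subset_nonneg C hq.1))
    set m : ℝ := (Hobj f f0 p v qv).toReal with hm
    have hmc : ((m : ℝ) : EReal) = Hobj f f0 p v qv :=
      EReal.coe_toReal (min_ne_top hp hs hf_one hqvmin) (Hobj_ne_bot hp hb qv)
    have hzq : Hobj f f0 p v qv < Hobj f f0 p v z := by
      have hle : Hobj f f0 p v qv ≤ Hobj f f0 p v z := hqvmin hzK.1
      rcases lt_or_eq_of_le hle with h | h
      · exact h
      · exfalso
        have hzmin' : IsMinOn (Hobj f f0 p v) (simplex C) z := by
          intro q hq
          show Hobj f f0 p v z ≤ Hobj f f0 p v q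
          rw [← h]
          exact hqvmin hq
        have : qv = z := min_unique hf hf0 hb hp hs hf_one hqvmem hzK.1 hqvmin hzmin'
        rw [← this] at hzK
        have := hzK.2
        simp only [Set.mem_setOf_eq, dist_self] at this
        linarith
    set W : EReal := min (Hobj f f0 p v z) (((m + 1 : ℝ) : EReal)) with hW
    have hmW : ((m : ℝ) : EReal) < W := by
      apply lt_min
      · rw [hmc]; exact hzq
      · exact_mod_cast lt_add_one m
    have hWt : W ≠ ⊤ := ne_top_of_le_ne_top (EReal.coe_ne_top _) (min_le_right _ _)
    have hWb : W ≠ ⊥ := ((EReal.bot_lt_coe m).trans hmW).ne'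
    set γ : ℝ := W.toReal with hγdef
    have hγ : ((γ : ℝ) : EReal) = W := EReal.coe_toReal hWt hWb
    have hγm : m < γ := by
      rw [← hγ] at hmW
      exact_mod_cast hmW
    have hKlb : ∀ q ∈ K, ((γ : ℝ) : EReal) ≤ Hobj f f0 p v q := by
      intro q hq
      rw [hγ]
      exact (min_le_left _ _).trans (hzmin hq)
    refine ⟨(γ - m) / 3, by linarith, fun w hw qw hqwmem hqwmin => ?_⟩
    by_contra hcon
    push_neg at hcon
    have hqwK : qw ∈ K := ⟨hqwmem, hcon⟩
    set δ : ℝ := (γ - m) / 3 with hδ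
    have hbd1 : |∑ c, (w c - v c) * qw c| ≤ dist w v := dist_lin_bound hqwmem w v
    have hbd2 : |∑ c, (w c - v c) * qv c| ≤ dist w v := dist_lin_bound hqvmem w v
    have h1 : ((γ - δ : ℝ) : EReal) ≤ Hobj f f0 p w qw := by
      rw [Hobj_shift (v := v) qw, EReal.coe_sub]
      apply EReal.sub_le_sub (hKlb qw hqwK)
      exact_mod_cast (abs_le.1 (hbd1.trans hw.le)).2
    have h2 : Hobj f f0 p w qv ≤ ((m + δ : ℝ) : EReal) := by
      rw [Hobj_shift (v := v) qv, ← hmc, ← EReal.coe_sub]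
      apply EReal.coe_le_coe_iff.2
      have := (abs_le.1 (hbd2.trans hw.le)).1
      linarith
    have h3 : Hobj f f0 p w qw ≤ Hobj f f0 p w qv := hqwmin hqvmem
    have : ((γ - δ : ℝ) : EReal) ≤ ((m + δ : ℝ) : EReal) := h1.trans (h3.trans h2)
    have : γ - δ ≤ m + δ := by exact_mod_cast this
    rw [hδ] at this
    linarith

end Conj

/-- Lemma 3 of the paper: for a strictly convex continuous
`f : (0,∞) → ℝ`, extended by `f(0) := lim_{t→0⁺} f(t) ∈ ℝ ∪ {∞}`, with
`f(1) = 0`, and `p ∈ Δ_C⁺`: (a) for every `v` the map `q ↦ D_f(q‖p) − vᵀq` has a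
unique minimizer `q*` over `Δ_C`; (b) `v ↦ D_f^conj(v,p)` is differentiable at
every `v`, with gradient `q*` — in particular a probability vector. -/
theorem fDivConj_gradient (C : ℕ) (hC : 0 < C)
    (f : ℝ → ℝ)
    (hf_strict_conv : StrictConvexOn ℝ (Set.Ioi 0) f)
    (hf_cont : ContinuousOn f (Set.Ioi 0))
    (hf_one : f 1 = 0)
    (f0 : EReal) (hf0_ne_bot : f0 ≠ ⊥)
    (hf0 : Filter.Tendsto (fun t => ((f t : ℝ) : EReal))
      (nhdsWithin 0 (Set.Ioi 0)) (nhds f0))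
    (p : Fin C → ℝ) (hp_pos : ∀ c, 0 < p c) (hp_sum : ∑ c, p c = 1) :
    ∀ v : Fin C → ℝ, ∃ qstar : Fin C → ℝ,
      qstar ∈ simplex C ∧
      IsMinOn (fun q : Fin C → ℝ =>
        fDivE f f0 q p - ((∑ c, v c * q c : ℝ) : EReal)) (simplex C) qstar ∧
      (∀ q' : Fin C → ℝ, q' ∈ simplex C →
        IsMinOn (fun q : Fin C → ℝ =>
          fDivE f f0 q p - ((∑ c, v c * q c : ℝ) : EReal)) (simplex C) q' →
        q' = qstar) ∧
      HasFDerivAt (fun w : Fin C → ℝ => fDivConjE f f0 w p)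
        (∑ c, qstar c •
          (ContinuousLinearMap.proj c : (Fin C → ℝ) →L[ℝ] ℝ)) v := by
  intro v
  obtain ⟨qv, hqvmem, hqvmin⟩ := exists_min hf_cont hf0 hp_pos hp_sum hf0_ne_bot v
  refine ⟨qv, hqvmem, hqvmin, ?_, ?_⟩
  · intro q' hq' hmin'
    exact min_unique hf_strict_conv hf0 hf0_ne_bot hp_pos hp_sum hf_one hq' hqvmem
      (hmin' : IsMinOn (Hobj f f0 p v) (simplex C) q') hqvmin
  · set ℓ : (Fin C → ℝ) →L[ℝ] ℝ :=
      ∑ c, qv c • (ContinuousLinearMap.proj c : (Fin C → ℝ) →L[ℝ] ℝ) with hℓ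
    have hℓapp : ∀ u : Fin C → ℝ, ℓ u = ∑ c, qv c * u c := by
      intro u
      rw [hℓ, ContinuousLinearMap.sum_apply]
      exact Finset.sum_congr rfl fun c _ => by
        simp [ContinuousLinearMap.smul_apply, ContinuousLinearMap.proj_apply]
    rw [hasFDerivAt_iff_isLittleO, Asymptotics.isLittleO_iff]
    intro ε hε
    obtain ⟨δ, hδ0, hδ⟩ := argmin_cont hf_strict_conv hf_cont hf0 hf0_ne_bot hp_pos
      hp_sum hf_one hqvmem hqvmin (show (0:ℝ) < ε / (C+1) by positivity)
    rw [Metric.eventually_nhds_iff]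
    refine ⟨δ, hδ0, fun w hw => ?_⟩
    obtain ⟨qw, hqwmem, hqwmin⟩ := exists_min hf_cont hf0 hp_pos hp_sum hf0_ne_bot w
    have hdist : dist qw qv < ε / (C+1) := hδ w hw qw hqwmem hqwmin
    have hlow : fDivConjE f f0 v p + ∑ c, (w c - v c) * qv c ≤ fDivConjE f f0 w p :=
      conj_lower hf_strict_conv hf_cont hf0 hf0_ne_bot hp_pos hp_sum hf_one hqvmem hqvmin w
    have hup : fDivConjE f f0 w p + ∑ c, (v c - w c) * qw c ≤ fDivConjE f f0 v p :=
      conj_lower hf_strict_conv hf_cont hf0 hf0_ne_bot hp_pos hp_sum hf_one hqwmem hqwmin v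
    have hℓwv : ℓ (w - v) = ∑ c, (w c - v c) * qv c := by
      rw [hℓapp]
      exact Finset.sum_congr rfl fun c _ => by rw [Pi.sub_apply]; ring
    have hflip : ∑ c, (v c - w c) * qw c = -∑ c, (w c - v c) * qw c := by
      rw [← Finset.sum_neg_distrib]
      exact Finset.sum_congr rfl fun c _ => by ring
    rw [hflip] at hup
    have hcomb : ∑ c, (w c - v c) * qw c - ∑ c, (w c - v c) * qv c
        = ∑ c, (w c - v c) * (qw c - qv c) := by
      rw [← Finset.sum_sub_distrib]
      exact Finset.sum_congr rfl fun c _ => by ring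
    have hterm : ∀ c : Fin C, (w c - v c) * (qw c - qv c) ≤ dist w v * dist qw qv := by
      intro c
      have h1 : |w c - v c| ≤ dist w v := by
        rw [← Real.dist_eq]; exact dist_le_pi_dist w v c
      have h2 : |qw c - qv c| ≤ dist qw qv := by
        rw [← Real.dist_eq]; exact dist_le_pi_dist qw qv c
      calc (w c - v c) * (qw c - qv c) ≤ |(w c - v c) * (qw c - qv c)| := le_abs_self _
        _ = |w c - v c| * |qw c - qv c| := abs_mul _ _
        _ ≤ dist w v * dist qw qv :=
            mul_le_mul h1 h2 (abs_nonneg _) dist_nonneg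
    have hsum_le : ∑ c, (w c - v c) * (qw c - qv c) ≤ ε * ‖w - v‖ := by
      calc ∑ c, (w c - v c) * (qw c - qv c)
          ≤ ∑ _c : Fin C, dist w v * dist qw qv :=
            Finset.sum_le_sum fun c _ => hterm c
        _ = (C : ℝ) * (dist w v * dist qw qv) := by
            rw [Finset.sum_const, Finset.card_univ, Fintype.card_fin, nsmul_eq_mul]
        _ ≤ ε * dist w v := by
            have hC1 : (1:ℝ) ≤ (C:ℝ) + 1 := by have := Nat.cast_nonneg (α := ℝ) C; linarith
            have hd1 : (0:ℝ) ≤ dist w v := dist_nonneg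
            have hd2 : (0:ℝ) ≤ dist qw qv := dist_nonneg
            have hkey : (C : ℝ) * dist qw qv ≤ ε := by
              have h1 : (C:ℝ) * dist qw qv ≤ (C:ℝ) * (ε / (C+1)) :=
                mul_le_mul_of_nonneg_left hdist.le (Nat.cast_nonneg C)
              have h2 : (C:ℝ) * (ε / (C+1)) ≤ ε := by
                rw [mul_div_assoc']
                rw [div_le_iff₀ (by positivity : (0:ℝ) < (C:ℝ)+1)]
                nlinarith [hε.le]
              linarith
            nlinarith
        _ = ε * ‖w - v‖ := by rw [← dist_eq_norm]
    have hE0 : 0 ≤ fDivConjE f f0 w p - fDivConjE f f0 v p - ℓ (w - v) := by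
      rw [hℓwv]; linarith
    have hEup : fDivConjE f f0 w p - fDivConjE f f0 v p - ℓ (w - v) ≤ ε * ‖w - v‖ := by
      rw [hℓwv]
      have := hcomb
      linarith [hsum_le]
    rw [Real.norm_eq_abs, abs_le]
    constructor
    · have : (0:ℝ) ≤ ε * ‖w - v‖ := mul_nonneg hε.le (norm_nonneg _)
      linarith
    · exact hEup
end

section
/- Let P be a Borel probability measure on ℝ^d, let f satisfy Assumption (f), let G : ℝ^d → ℝ^{K×C} be bounded and measurable, and let h_base, h : ℝ^d → Δ_C be measurable with inf_{x ∈ ℝ^d, c ∈ [C]} h_base_c(x) > 0 and inf_{x ∈ ℝ^d, c ∈ [C]} h_c(x) > 0. Suppose h is strictly feasible, i.e., μ_k(h) := E_{X∼P}[(G(X) h(X))_k] < 0 for every k ∈ [K]. Then every minimizer λ* ∈ ℝ₊^K of the function λ ↦ E_{X∼P}[ D_f^conj(−G(X)ᵀλ, h_base(X)) ] satisfies ‖λ*‖₁ ≤ E_{X∼P}[ Σ_{c=1}^C h_base_c(X) f( h_c(X) / h_base_c(X) ) ] / min_{k ∈ [K]} ( −μ_k(h) ). -/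
open MeasureTheory

/-- The relative interior `Δ_C⁺` of the probability simplex. -/
def simplexPos (C : ℕ) : Set (Fin C → ℝ) := {q | (∀ c, 0 < q c) ∧ ∑ c, q c = 1}

/-- The f-divergence `D_f(q‖p) = ∑_c p_c f(q_c / p_c)`. -/
noncomputable def fDiv {C : ℕ} (f : ℝ → ℝ) (q p : Fin C → ℝ) : ℝ :=
  ∑ c, p c * f (q c / p c)

/-- The convex conjugate of `D_f(·‖p)`, `sup_q (vᵀq − D_f(q‖p))`; under
Assumption (f) (`f′(0⁺) = −∞`) the supremum over `Δ_C` equals the supremum over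
the relative interior `Δ_C⁺`, which is used here. -/
noncomputable def fDivConj {C : ℕ} (f : ℝ → ℝ) (v p : Fin C → ℝ) : ℝ :=
  sSup ((fun q => ∑ c, v c * q c - fDiv f q p) '' simplexPos C)

section Aux

variable {C : ℕ} {f : ℝ → ℝ}

lemma simplexPos_le_one {q : Fin C → ℝ} (hq : q ∈ simplexPos C) (c : Fin C) : q c ≤ 1 := by
  have := Finset.single_le_sum (f := fun c => q c) (fun i _ => (hq.1 i).le) (Finset.mem_univ c)
  simpa [hq.2] using this

lemma fDiv_nonneg (hconv : ConvexOn ℝ (Set.Ioi 0) f) (hf1 : f 1 = 0) {q p : Fin C → ℝ}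
    (hq : q ∈ simplexPos C) (hp : p ∈ simplexPos C) : 0 ≤ fDiv f q p := by
  have h1 := hconv.map_sum_le (t := Finset.univ) (w := fun c => p c) (p := fun c => q c / p c)
    (fun c _ => (hp.1 c).le) hp.2 (fun c _ => Set.mem_Ioi.mpr (div_pos (hq.1 c) (hp.1 c)))
  have h2 : ∑ c, p c • (q c / p c) = 1 := by
    rw [← hq.2]
    refine Finset.sum_congr rfl fun c _ => ?_
    rw [smul_eq_mul, mul_comm, div_mul_cancel₀ _ (hp.1 c).ne']
  rw [h2, hf1] at h1
  simpa [fDiv, smul_eq_mul] using h1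

lemma fDiv_self (hf1 : f 1 = 0) {p : Fin C → ℝ} (hp : p ∈ simplexPos C) : fDiv f p p = 0 := by
  refine Finset.sum_eq_zero fun c _ => ?_
  rw [div_self (hp.1 c).ne', hf1, mul_zero]

lemma elem_le_abs_sum (hconv : ConvexOn ℝ (Set.Ioi 0) f) (hf1 : f 1 = 0) {v q p : Fin C → ℝ}
    (hq : q ∈ simplexPos C) (hp : p ∈ simplexPos C) :
    ∑ c, v c * q c - fDiv f q p ≤ ∑ c, |v c| := by
  have h1 : ∑ c, v c * q c ≤ ∑ c, |v c| := by
    refine Finset.sum_le_sum fun c _ => ?_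
    calc v c * q c ≤ |v c| * q c := mul_le_mul_of_nonneg_right (le_abs_self _) (hq.1 c).le
      _ ≤ |v c| * 1 := mul_le_mul_of_nonneg_left (simplexPos_le_one hq c) (abs_nonneg _)
      _ = |v c| := mul_one _
  linarith [fDiv_nonneg hconv hf1 hq hp]

lemma bddAbove_conjSet (hconv : ConvexOn ℝ (Set.Ioi 0) f) (hf1 : f 1 = 0) {v p : Fin C → ℝ}
    (hp : p ∈ simplexPos C) :
    BddAbove ((fun q => ∑ c, v c * q c - fDiv f q p) '' simplexPos C) := by
  refine ⟨∑ c, |v c|, ?_⟩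
  rintro a ⟨q, hq, rfl⟩
  exact elem_le_abs_sum hconv hf1 hq hp

lemma le_fDivConj (hconv : ConvexOn ℝ (Set.Ioi 0) f) (hf1 : f 1 = 0) {v q p : Fin C → ℝ}
    (hq : q ∈ simplexPos C) (hp : p ∈ simplexPos C) :
    ∑ c, v c * q c - fDiv f q p ≤ fDivConj f v p :=
  le_csSup (bddAbove_conjSet hconv hf1 hp) ⟨q, hq, rfl⟩

lemma fDivConj_le (hconv : ConvexOn ℝ (Set.Ioi 0) f) (hf1 : f 1 = 0) {v p : Fin C → ℝ}
    (hp : p ∈ simplexPos C) : fDivConj f v p ≤ ∑ c, |v c| := by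
  refine csSup_le ⟨_, ⟨p, hp, rfl⟩⟩ ?_
  rintro a ⟨q, hq, rfl⟩
  exact elem_le_abs_sum hconv hf1 hq hp

lemma neg_le_fDivConj (hconv : ConvexOn ℝ (Set.Ioi 0) f) (hf1 : f 1 = 0) {v p : Fin C → ℝ}
    (hp : p ∈ simplexPos C) : -∑ c, |v c| ≤ fDivConj f v p := by
  have h1 : ∑ c, v c * p c - fDiv f p p ≤ fDivConj f v p := le_fDivConj hconv hf1 hp hp
  rw [fDiv_self hf1 hp, sub_zero] at h1
  refine le_trans ?_ h1
  have : -∑ c, |v c| ≤ -|∑ c, v c * p c| := by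
    have h3 : |∑ c, v c * p c| ≤ ∑ c, |v c| := by
      refine (Finset.abs_sum_le_sum_abs _ _).trans (Finset.sum_le_sum fun c _ => ?_)
      rw [abs_mul, abs_of_nonneg (hp.1 c).le]
      calc |v c| * p c ≤ |v c| * 1 := mul_le_mul_of_nonneg_left (simplexPos_le_one hp c) (abs_nonneg _)
        _ = |v c| := mul_one _
    linarith
  exact this.trans (neg_abs_le _)

lemma abs_fDivConj_le (hconv : ConvexOn ℝ (Set.Ioi 0) f) (hf1 : f 1 = 0) {v p : Fin C → ℝ}
    (hp : p ∈ simplexPos C) : |fDivConj f v p| ≤ ∑ c, |v c| :=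
  abs_le.mpr ⟨neg_le_fDivConj hconv hf1 hp, fDivConj_le hconv hf1 hp⟩

lemma fDivConj_zero (hconv : ConvexOn ℝ (Set.Ioi 0) f) (hf1 : f 1 = 0) {p : Fin C → ℝ}
    (hp : p ∈ simplexPos C) : fDivConj f (fun _ => (0:ℝ)) p = 0 := by
  have h1 : fDivConj f (fun _ => (0:ℝ)) p ≤ ∑ c : Fin C, |(0:ℝ)| := fDivConj_le hconv hf1 hp
  have h2 : (0:ℝ) ≤ fDivConj f (fun _ => (0:ℝ)) p := by
    have := le_fDivConj (v := fun _ => (0:ℝ)) hconv hf1 hp hp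
    rw [fDiv_self hf1 hp] at this
    simpa using this
  simp only [abs_zero, Finset.sum_const_zero] at h1
  linarith

end Aux

/-- Lemma 5 of the paper: any minimizer `λ*` over the nonnegative
orthant of `λ ↦ E[D_f^conj(−G(X)ᵀλ, h_base(X))]` satisfies
`‖λ*‖₁ ≤ E[∑_c h_base_c(X) f(h_c(X)/h_base_c(X))] / min_k (−μ_k(h))` for any
strictly feasible classifier `h`. -/
theorem dual_minimizer_l1_bound (d K C : ℕ) (hd : 0 < d) (hK : 0 < K) (hC : 0 < C)
    (P : Measure (Fin d → ℝ)) [IsProbabilityMeasure P]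
    (f f' f'' : ℝ → ℝ)
    (hf_deriv : ∀ t ∈ Set.Ioi (0 : ℝ), HasDerivAt f (f' t) t)
    (hf_deriv2 : ∀ t ∈ Set.Ioi (0 : ℝ), HasDerivAt f' (f'' t) t)
    (hf''_cont : ContinuousOn f'' (Set.Ioi 0))
    (hf''_pos : ∀ t ∈ Set.Ioi (0 : ℝ), 0 < f'' t)
    (hf_one : f 1 = 0)
    (hf'_atBot : Filter.Tendsto f' (nhdsWithin 0 (Set.Ioi 0)) Filter.atBot)
    (G : (Fin d → ℝ) → Fin K → Fin C → ℝ)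
    (hG_meas : ∀ k c, Measurable fun x => G x k c)
    (hG_bdd : ∃ M : ℝ, ∀ x k c, |G x k c| ≤ M)
    (hbase : (Fin d → ℝ) → Fin C → ℝ)
    (hbase_meas : ∀ c, Measurable fun x => hbase x c)
    (hbase_simplex : ∀ x, hbase x ∈ simplex C)
    (hbase_pos : ∃ ε > (0 : ℝ), ∀ x c, ε ≤ hbase x c)
    (h : (Fin d → ℝ) → Fin C → ℝ)
    (h_meas : ∀ c, Measurable fun x => h x c)
    (h_simplex : ∀ x, h x ∈ simplex C)
    (h_pos : ∃ ε > (0 : ℝ), ∀ x c, ε ≤ h x c)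
    (h_strict_feas : ∀ k, ∫ x, (∑ c, G x k c * h x c) ∂P < 0)
    (lam : Fin K → ℝ) (hlam_nonneg : ∀ k, 0 ≤ lam k)
    (hlam_min : IsMinOn
      (fun l : Fin K → ℝ =>
        ∫ x, fDivConj f (fun c => -∑ k, G x k c * l k) (hbase x) ∂P)
      {l : Fin K → ℝ | ∀ k, 0 ≤ l k} lam) :
    ∑ k, |lam k| ≤
      (∫ x, (∑ c, hbase x c * f (h x c / hbase x c)) ∂P) /
        (⨅ k : Fin K, -∫ x, (∑ c, G x k c * h x c) ∂P) := by
    classical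
  obtain ⟨MG, hMG⟩ := hG_bdd
  obtain ⟨εb, εb_pos, hεb⟩ := hbase_pos
  obtain ⟨εh, εh_pos, hεh⟩ := h_pos
  haveI hKne : Nonempty (Fin K) := ⟨⟨0, hK⟩⟩
  haveI hCne : Nonempty (Fin C) := ⟨⟨0, hC⟩⟩
  set x0 : Fin d → ℝ := fun _ => 0 with hx0
  set k0 : Fin K := ⟨0, hK⟩ with hk0'
  set c0 : Fin C := ⟨0, hC⟩ with hc0'
  have hMG_nonneg : 0 ≤ MG := (abs_nonneg _).trans (hMG x0 k0 c0)
  have hbase_sp : ∀ x, hbase x ∈ simplexPos C := fun x =>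
    ⟨fun c => εb_pos.trans_le (hεb x c), (hbase_simplex x).2⟩
  have h_sp : ∀ x, h x ∈ simplexPos C := fun x =>
    ⟨fun c => εh_pos.trans_le (hεh x c), (h_simplex x).2⟩
  have hf_cont : ContinuousOn f (Set.Ioi 0) := fun t ht =>
    ((hf_deriv t ht).differentiableAt.continuousAt).continuousWithinAt
  have hconv : ConvexOn ℝ (Set.Ioi 0) f := by
    refine convexOn_of_hasDerivWithinAt2_nonneg (f' := f') (f'' := f'')
      (convex_Ioi 0) hf_cont ?_ ?_ ?_
    · intro t ht
      rw [interior_Ioi] at ht ⊢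
      exact (hf_deriv t ht).hasDerivWithinAt
    · intro t ht
      rw [interior_Ioi] at ht ⊢
      exact (hf_deriv2 t ht).hasDerivWithinAt
    · intro t ht
      rw [interior_Ioi] at ht
      exact (hf''_pos t ht).le
  have meas_comp_f : ∀ (δ : ℝ), 0 < δ → ∀ (m : (Fin d → ℝ) → ℝ), Measurable m →
      (∀ x, δ ≤ m x) → Measurable fun x => f (m x) := by
    intro δ hδ m hm hb
    have hFcont : Continuous fun t : ℝ => f (max δ t) :=
      hf_cont.comp_continuous (continuous_const.max continuous_id)
        (fun t => Set.mem_Ioi.mpr (lt_of_lt_of_le hδ (le_max_left _ _)))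
    have heq : (fun x => f (m x)) = fun x => f (max δ (m x)) :=
      funext fun x => by rw [max_eq_right (hb x)]
    rw [heq]
    exact hFcont.measurable.comp hm
  set v : (Fin d → ℝ) → Fin C → ℝ := fun x c => -∑ k, G x k c * lam k with hv_def
  have hv_meas : ∀ c, Measurable fun x => v x c := fun c =>
    (Finset.measurable_sum _ fun k _ => (hG_meas k c).mul measurable_const).neg
  have hv_bd : ∀ x c, |v x c| ≤ MG * ∑ k, lam k := by
    intro x c
    show |-∑ k, G x k c * lam k| ≤ _
    rw [abs_neg]
    calc |∑ k, G x k c * lam k| ≤ ∑ k, |G x k c * lam k| := Finset.abs_sum_le_sum_abs _ _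
      _ ≤ ∑ k, MG * lam k := Finset.sum_le_sum fun k _ => by
          rw [abs_mul, abs_of_nonneg (hlam_nonneg k)]
          exact mul_le_mul_of_nonneg_right (hMG x k c) (hlam_nonneg k)
      _ = MG * ∑ k, lam k := by rw [Finset.mul_sum]
  set R : ℝ := (C : ℝ) * (MG * ∑ k, lam k) with hR_def
  have hvsum : ∀ x, ∑ c, |v x c| ≤ R := by
    intro x
    calc ∑ c, |v x c| ≤ ∑ _c : Fin C, (MG * ∑ k, lam k) :=
          Finset.sum_le_sum fun c _ => hv_bd x c
      _ = R := by
          rw [Finset.sum_const, Finset.card_univ, Fintype.card_fin, nsmul_eq_mul]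
  -- countable dense subset of simplexPos
  have hsp_ne : (simplexPos C).Nonempty := by
    refine ⟨fun _ => (C : ℝ)⁻¹, fun c => inv_pos.mpr (Nat.cast_pos.mpr hC), ?_⟩
    rw [Finset.sum_const, Finset.card_univ, Fintype.card_fin, nsmul_eq_mul,
      mul_inv_cancel₀ (Nat.cast_ne_zero.mpr hC.ne')]
  haveI : Nonempty ↥(simplexPos C) := hsp_ne.to_subtype
  obtain ⟨s, hs_count, hs_dense⟩ := TopologicalSpace.exists_countable_dense ↥(simplexPos C)
  set T : Set (Fin C → ℝ) := Subtype.val '' s with hT_def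
  have hT_sub : T ⊆ simplexPos C := by rintro _ ⟨⟨q, hq⟩, -, rfl⟩; exact hq
  have hT_closure : ∀ q ∈ simplexPos C, q ∈ closure T := by
    intro q hq
    have h1 : (⟨q, hq⟩ : ↥(simplexPos C)) ∈ closure s := hs_dense _
    exact continuous_subtype_val.continuousWithinAt.mem_closure_image h1
  have hT_ne : T.Nonempty := by
    obtain ⟨q0, hq0⟩ := hsp_ne
    rcases Set.eq_empty_or_nonempty T with hT | hT
    · exfalso
      have := hT_closure q0 hq0
      rw [hT, closure_empty] at this
      exact this
    · exact hT
  obtain ⟨e, he⟩ := (hs_count.image Subtype.val).exists_eq_range hT_ne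
  have he_mem : ∀ n, e n ∈ simplexPos C := fun n => hT_sub (by
    rw [hT_def, he]; exact Set.mem_range_self n)
  set U : Set (Fin C → ℝ) := Set.univ.pi (fun _ => Set.Ioi (0 : ℝ)) with hU_def
  have hU_open : IsOpen U := isOpen_set_pi Set.finite_univ (fun _ _ => isOpen_Ioi)
  have hU_mem : ∀ q ∈ simplexPos C, q ∈ U := fun q hq c _ => hq.1 c
  have hφ_cont : ∀ (w p : Fin C → ℝ), (∀ c, 0 < p c) →
      ContinuousOn (fun q : Fin C → ℝ => ∑ c, w c * q c - fDiv f q p) U := by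
    intro w p hp
    apply ContinuousOn.sub
    · exact (continuous_finset_sum _ fun c _ =>
        continuous_const.mul (continuous_apply c)).continuousOn
    · unfold fDiv
      apply continuousOn_finset_sum
      intro c _
      refine continuousOn_const.mul ?_
      have hinner : ContinuousOn (fun q : Fin C → ℝ => q c / p c) U :=
        Continuous.continuousOn (Continuous.div_const (continuous_apply (A := fun _ : Fin C => ℝ) c) (p c))
      have hmaps : Set.MapsTo (fun q : Fin C → ℝ => q c / p c) U (Set.Ioi 0) := fun q hq =>
        Set.mem_Ioi.mpr (div_pos (hq c (Set.mem_univ c)) (hp c))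
      exact hf_cont.comp hinner hmaps
  have key : ∀ (w p : Fin C → ℝ), p ∈ simplexPos C →
      fDivConj f w p = ⨆ n : ℕ, (∑ c, w c * e n c - fDiv f (e n) p) := by
    intro w p hp
    set φ := fun q : Fin C → ℝ => ∑ c, w c * q c - fDiv f q p with hφ
    have bddA : BddAbove (φ '' simplexPos C) := bddAbove_conjSet hconv hf_one hp
    have hrange_sub : Set.range (fun n => φ (e n)) ⊆ φ '' simplexPos C := by
      rintro _ ⟨n, rfl⟩; exact ⟨e n, he_mem n, rfl⟩
    have bddB : BddAbove (Set.range fun n => φ (e n)) := bddA.mono hrange_sub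
    apply le_antisymm
    · refine csSup_le ⟨φ p, p, hp, rfl⟩ ?_
      rintro a ⟨q, hq, rfl⟩
      have hca : ContinuousWithinAt φ T q :=
        ((hφ_cont w p hp.1).continuousAt (hU_open.mem_nhds (hU_mem q hq))).continuousWithinAt
      have hq_cl : φ q ∈ closure (φ '' T) := hca.mem_closure_image (hT_closure q hq)
      have hsub : φ '' T ⊆ Set.Iic (⨆ n, φ (e n)) := by
        rintro _ ⟨q', hq', rfl⟩
        rw [hT_def, he] at hq'
        obtain ⟨n, rfl⟩ := hq'
        exact le_ciSup bddB n
      exact closure_minimal hsub isClosed_Iic hq_cl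
    · exact ciSup_le fun n => le_csSup bddA ⟨e n, he_mem n, rfl⟩
  set g : ℕ → (Fin d → ℝ) → ℝ :=
    fun n x => ∑ c, v x c * e n c - fDiv f (e n) (hbase x) with hg_def
  have hg_meas : ∀ n, Measurable (g n) := by
    intro n
    apply Measurable.sub
    · exact Finset.measurable_sum _ fun c _ => (hv_meas c).mul measurable_const
    · unfold fDiv
      apply Finset.measurable_sum
      intro c _
      refine (hbase_meas c).mul ?_
      refine meas_comp_f (e n c) ((he_mem n).1 c) _
        (measurable_const.div (hbase_meas c)) ?_
      intro x
      rw [le_div_iff₀ ((hbase_sp x).1 c)]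
      nlinarith [simplexPos_le_one (hbase_sp x) c, (he_mem n).1 c]
  have hg_ub : ∀ n x, g n x ≤ R := fun n x =>
    (elem_le_abs_sum hconv hf_one (he_mem n) (hbase_sp x)).trans (hvsum x)
  have hg_bddrange : ∀ x, BddAbove (Set.range fun n => g n x) := fun x =>
    ⟨R, by rintro _ ⟨n, rfl⟩; exact hg_ub n x⟩
  set pm : ℕ → (Fin d → ℝ) → ℝ :=
    fun N => Nat.rec (g 0) (fun k ih => fun x => max (ih x) (g (k + 1) x)) N with hpm_def
  have hpm_succ : ∀ N, pm (N + 1) = fun x => max (pm N x) (g (N + 1) x) := fun N => rfl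
  have hpm_meas : ∀ N, Measurable (pm N) := by
    intro N
    induction N with
    | zero => exact hg_meas 0
    | succ N ih => rw [hpm_succ]; exact ih.max (hg_meas (N + 1))
  have hpm_mono : ∀ x, Monotone fun N => pm N x := fun x =>
    monotone_nat_of_le_succ fun N => le_max_left _ _
  have hpm_le : ∀ N x, pm N x ≤ ⨆ n, g n x := by
    intro N
    induction N with
    | zero => exact fun x => le_ciSup (hg_bddrange x) 0
    | succ N ih => exact fun x => max_le (ih x) (le_ciSup (hg_bddrange x) (N + 1))
  have hg_le_pm : ∀ n x, g n x ≤ pm n x := by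
    intro n
    induction n with
    | zero => exact fun x => le_refl _
    | succ n ih => exact fun x => le_max_right _ _
  have hpm_tendsto : Filter.Tendsto pm Filter.atTop (nhds fun x => ⨆ n, g n x) := by
    rw [tendsto_pi_nhds]
    intro x
    have hbdd : BddAbove (Set.range fun N => pm N x) :=
      ⟨⨆ n, g n x, by rintro _ ⟨N, rfl⟩; exact hpm_le N x⟩
    have h1 := tendsto_atTop_ciSup (hpm_mono x) hbdd
    have h2 : (⨆ N, pm N x) = ⨆ n, g n x := le_antisymm
      (ciSup_le fun N => hpm_le N x)
      (ciSup_le fun n => (hg_le_pm n x).trans (le_ciSup hbdd n))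
    rwa [h2] at h1
  have conj_meas : Measurable fun x => fDivConj f (v x) (hbase x) := by
    have h1 : Measurable fun x => ⨆ n, g n x :=
      measurable_of_tendsto_metrizable' Filter.atTop hpm_meas hpm_tendsto
    have h2 : (fun x => fDivConj f (v x) (hbase x)) = fun x => ⨆ n, g n x :=
      funext fun x => key (v x) (hbase x) (hbase_sp x)
    rw [h2]; exact h1
  have conj_int : Integrable (fun x => fDivConj f (v x) (hbase x)) P := by
    refine Integrable.mono' (integrable_const R) conj_meas.aestronglyMeasurable ?_
    refine Filter.Eventually.of_forall fun x => ?_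
    rw [Real.norm_eq_abs]
    exact (abs_fDivConj_le hconv hf_one (hbase_sp x)).trans (hvsum x)
  have hGh_meas : ∀ k, Measurable fun x => ∑ c, G x k c * h x c := fun k =>
    Finset.measurable_sum _ fun c _ => (hG_meas k c).mul (h_meas c)
  have hGh_int : ∀ k, Integrable (fun x => ∑ c, G x k c * h x c) P := by
    intro k
    refine Integrable.mono' (integrable_const ((C : ℝ) * MG))
      (hGh_meas k).aestronglyMeasurable ?_
    refine Filter.Eventually.of_forall fun x => ?_
    rw [Real.norm_eq_abs]
    calc |∑ c, G x k c * h x c| ≤ ∑ c, |G x k c * h x c| := Finset.abs_sum_le_sum_abs _ _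
      _ ≤ ∑ _c : Fin C, MG := Finset.sum_le_sum fun c _ => by
          rw [abs_mul, abs_of_nonneg ((h_simplex x).1 c)]
          calc |G x k c| * h x c ≤ MG * 1 :=
                mul_le_mul (hMG x k c) (simplexPos_le_one (h_sp x) c)
                  ((h_simplex x).1 c) hMG_nonneg
            _ = MG := mul_one _
      _ = (C : ℝ) * MG := by
          rw [Finset.sum_const, Finset.card_univ, Fintype.card_fin, nsmul_eq_mul]
  have hratio_mem : ∀ x c, h x c / hbase x c ∈ Set.Icc εh εb⁻¹ := by
    intro x c
    constructor
    · rw [le_div_iff₀ ((hbase_sp x).1 c)]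
      nlinarith [simplexPos_le_one (hbase_sp x) c, hεh x c, εh_pos]
    · rw [div_le_iff₀ ((hbase_sp x).1 c)]
      have h1 : (1 : ℝ) ≤ εb⁻¹ * hbase x c := by
        calc (1 : ℝ) = εb⁻¹ * εb := (inv_mul_cancel₀ εb_pos.ne').symm
          _ ≤ εb⁻¹ * hbase x c :=
              mul_le_mul_of_nonneg_left (hεb x c) (inv_nonneg.mpr εb_pos.le)
      exact (simplexPos_le_one (h_sp x) c).trans h1
  obtain ⟨Mf, hMf⟩ := (isCompact_Icc (a := εh) (b := εb⁻¹)).exists_bound_of_continuousOn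
    (hf_cont.mono fun t ht => lt_of_lt_of_le εh_pos ht.1)
  have hMf_nonneg : 0 ≤ Mf := (norm_nonneg _).trans (hMf _ (hratio_mem x0 c0))
  have hB_meas : Measurable fun x => ∑ c, hbase x c * f (h x c / hbase x c) :=
    Finset.measurable_sum _ fun c _ => (hbase_meas c).mul
      (meas_comp_f εh εh_pos _ ((h_meas c).div (hbase_meas c)) fun x => (hratio_mem x c).1)
  have hB_bd : ∀ x, |∑ c, hbase x c * f (h x c / hbase x c)| ≤ (C : ℝ) * Mf := by
    intro x
    calc |∑ c, hbase x c * f (h x c / hbase x c)|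
        ≤ ∑ c, |hbase x c * f (h x c / hbase x c)| := Finset.abs_sum_le_sum_abs _ _
      _ ≤ ∑ _c : Fin C, Mf := Finset.sum_le_sum fun c _ => by
          rw [abs_mul, abs_of_nonneg ((hbase_simplex x).1 c)]
          calc hbase x c * |f (h x c / hbase x c)| ≤ 1 * Mf :=
                mul_le_mul (simplexPos_le_one (hbase_sp x) c)
                  ((Real.norm_eq_abs _ ▸ hMf _ (hratio_mem x c)))
                  (abs_nonneg _) zero_le_one
            _ = Mf := one_mul _
      _ = (C : ℝ) * Mf := by
          rw [Finset.sum_const, Finset.card_univ, Fintype.card_fin, nsmul_eq_mul]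
  have hB_int : Integrable (fun x => ∑ c, hbase x c * f (h x c / hbase x c)) P := by
    refine Integrable.mono' (integrable_const ((C : ℝ) * Mf)) hB_meas.aestronglyMeasurable ?_
    exact Filter.Eventually.of_forall fun x => (Real.norm_eq_abs _ ▸ hB_bd x)
  have hvh_meas : Measurable fun x => ∑ c, v x c * h x c :=
    Finset.measurable_sum _ fun c _ => (hv_meas c).mul (h_meas c)
  have hvh_bd : ∀ x, |∑ c, v x c * h x c| ≤ R := by
    intro x
    calc |∑ c, v x c * h x c| ≤ ∑ c, |v x c * h x c| := Finset.abs_sum_le_sum_abs _ _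
      _ ≤ ∑ c, |v x c| := Finset.sum_le_sum fun c _ => by
          rw [abs_mul, abs_of_nonneg ((h_simplex x).1 c)]
          calc |v x c| * h x c ≤ |v x c| * 1 :=
                mul_le_mul_of_nonneg_left (simplexPos_le_one (h_sp x) c) (abs_nonneg _)
            _ = |v x c| := mul_one _
      _ ≤ R := hvsum x
  have hvh_int : Integrable (fun x => ∑ c, v x c * h x c) P := by
    refine Integrable.mono' (integrable_const R) hvh_meas.aestronglyMeasurable ?_
    exact Filter.Eventually.of_forall fun x => (Real.norm_eq_abs _ ▸ hvh_bd x)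
  have g_int : Integrable (fun x => ∑ c, v x c * h x c - fDiv f (h x) (hbase x)) P :=
    hvh_int.sub hB_int
  have step1 : ∫ x, (∑ c, v x c * h x c - fDiv f (h x) (hbase x)) ∂P ≤
      ∫ x, fDivConj f (v x) (hbase x) ∂P :=
    integral_mono g_int conj_int fun x => le_fDivConj hconv hf_one (h_sp x) (hbase_sp x)
  have step2 : ∫ x, fDivConj f (v x) (hbase x) ∂P ≤ 0 := by
    have h0mem : (0 : Fin K → ℝ) ∈ {l : Fin K → ℝ | ∀ k, 0 ≤ l k} := fun k => le_refl 0
    have hmin := isMinOn_iff.mp hlam_min 0 h0mem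
    have heq0 : ∫ x, fDivConj f (fun c => -∑ k, G x k c * (0 : Fin K → ℝ) k) (hbase x) ∂P
        = 0 := by
      have hzero : ∀ x,
          fDivConj f (fun c => -∑ k, G x k c * (0 : Fin K → ℝ) k) (hbase x) = 0 := by
        intro x
        have hz : (fun c => -∑ k, G x k c * (0 : Fin K → ℝ) k) = fun _ => (0 : ℝ) := by
          funext c; simp
        rw [hz]
        exact fDivConj_zero hconv hf_one (hbase_sp x)
      rw [integral_congr_ae (Filter.Eventually.of_forall hzero)]
      simp
    exact hmin.trans_eq heq0
  have hpt : ∀ x, ∑ c, v x c * h x c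
      = ∑ k, -lam k * (∑ c, G x k c * h x c) := by
    intro x
    calc ∑ c, v x c * h x c = ∑ c, ∑ k, -lam k * (G x k c * h x c) := by
          refine Finset.sum_congr rfl fun c _ => ?_
          show (-∑ k, G x k c * lam k) * h x c = _
          rw [neg_mul, Finset.sum_mul, ← Finset.sum_neg_distrib]
          exact Finset.sum_congr rfl fun k _ => by ring
      _ = ∑ k, ∑ c, -lam k * (G x k c * h x c) := Finset.sum_comm
      _ = ∑ k, -lam k * (∑ c, G x k c * h x c) := by
          refine Finset.sum_congr rfl fun k _ => ?_
          rw [Finset.mul_sum]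
  have step3 : ∫ x, (∑ c, v x c * h x c - fDiv f (h x) (hbase x)) ∂P
      = (∑ k, -lam k * ∫ x, (∑ c, G x k c * h x c) ∂P)
        - ∫ x, (∑ c, hbase x c * f (h x c / hbase x c)) ∂P := by
    unfold fDiv
    rw [integral_sub hvh_int hB_int]
    congr 1
    calc ∫ x, (∑ c, v x c * h x c) ∂P
        = ∫ x, (∑ k, -lam k * (∑ c, G x k c * h x c)) ∂P :=
          integral_congr_ae (Filter.Eventually.of_forall hpt)
      _ = ∑ k, ∫ x, -lam k * (∑ c, G x k c * h x c) ∂P :=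
          integral_finset_sum _ fun k _ => ((hGh_int k).const_mul _)
      _ = ∑ k, -lam k * ∫ x, (∑ c, G x k c * h x c) ∂P :=
          Finset.sum_congr rfl fun k _ => integral_const_mul _ _
  set A : Fin K → ℝ := fun k => -∫ x, (∑ c, G x k c * h x c) ∂P with hA_def
  have hB_ge : ∑ k, lam k * A k ≤ ∫ x, (∑ c, hbase x c * f (h x c / hbase x c)) ∂P := by
    have hch := step1.trans step2
    rw [step3] at hch
    have h2 : ∑ k, lam k * A k = ∑ k, -lam k * ∫ x, (∑ c, G x k c * h x c) ∂P :=
      Finset.sum_congr rfl fun k _ => by rw [hA_def]; ring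
    linarith [h2]
  have hA_pos : ∀ k, 0 < A k := fun k => by
    rw [hA_def]
    exact neg_pos.mpr (h_strict_feas k)
  set m := ⨅ k, A k with hm_def
  have hbddA : BddBelow (Set.range A) := (Set.finite_range A).bddBelow
  have hm_le : ∀ k, m ≤ A k := fun k => ciInf_le hbddA k
  have hm_pos : 0 < m := by
    obtain ⟨kk, hkk⟩ := exists_eq_ciInf_of_finite (f := A)
    rw [hm_def, ← hkk]
    exact hA_pos kk
  have hfinal : (∑ k, |lam k|) * m
      ≤ ∫ x, (∑ c, hbase x c * f (h x c / hbase x c)) ∂P := by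
    calc (∑ k, |lam k|) * m = ∑ k, |lam k| * m := Finset.sum_mul _ _ _
      _ ≤ ∑ k, lam k * A k := Finset.sum_le_sum fun k _ => by
          rw [abs_of_nonneg (hlam_nonneg k)]
          exact mul_le_mul_of_nonneg_left (hm_le k) (hlam_nonneg k)
      _ ≤ _ := hB_ge
  exact (le_div_iff₀ hm_pos).mpr hfinal
end

section
/- Let P be a Borel probability measure on ℝ^d, let f satisfy Assumption (f), let G : ℝ^d → ℝ^{K×C} be bounded and measurable, and let h_base : ℝ^d → Δ_C be measurable with entries uniformly bounded away from 0. Define D* := inf_{λ ∈ ℝ₊^K} E_{X∼P}[ D_f^conj(−G(X)ᵀλ, h_base(X)) ], and suppose D* is attained by some λ* ∈ ℝ₊^K with ‖λ*‖₁ ≤ λ_max for a given constant λ_max ≥ 0. Fix ζ > 0, set g_mean := E_{X∼P}[ ‖G(X)‖₂² ] (squared spectral norm) and θ_reg := λ_max² (1 + g_mean)/2, and let λ_ζ* be the unique minimizer over ℝ₊^K of A(λ) := E_{X∼P}[ D_f^conj(−G(X)ᵀλ, h_base(X)) ] + (ζ/2) E_{X∼P}[ ‖G(X)ᵀλ‖₂²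 + ‖λ‖₂² ], with optimal value D_ζ* := A(λ_ζ*). Then E_{X∼P}[ D_f^conj(−G(X)ᵀλ_ζ*, h_base(X)) ] ≤ D_ζ* ≤ D* + θ_reg · ζ. -/
open MeasureTheory

/-- Squared spectral (ℓ²-operator) norm of a `K × C` matrix:
`‖M‖₂² = sup {‖Mu‖₂² : ‖u‖₂ ≤ 1}`. -/
noncomputable def specNormSq {K C : ℕ} (M : Fin K → Fin C → ℝ) : ℝ :=
  sSup ((fun u => ∑ k, (∑ c, M k c * u c) ^ 2) ''
    {u : Fin C → ℝ | ∑ c, u c ^ 2 ≤ 1})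

/-!
The first inequality holds because the regularizer is nonnegative. For the second, minimality
of `λ_ζ*` gives `A(λ_ζ*) ≤ A(λ*)`, and the regularizer at `λ*` is controlled by
`‖G(X)ᵀλ‖₂² ≤ ‖G(X)‖₂² ‖λ‖₂²` together with `‖λ*‖₂ ≤ ‖λ*‖₁ ≤ λ_max`, so that
`(ζ/2) E[‖G(X)ᵀλ*‖₂² + ‖λ*‖₂²] ≤ θ_reg ζ`.
-/

open Finset

section SpecNormSq

variable {K C : ℕ} (M : Fin K → Fin C → ℝ)

lemma sum_sq_apply_le_sum_sq {v : Fin C → ℝ} (hv : ∑ c, v c ^ 2 ≤ 1) :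
    ∑ k, (∑ c, M k c * v c) ^ 2 ≤ ∑ k, ∑ c, M k c ^ 2 := by
  refine sum_le_sum fun k _ => ?_
  calc (∑ c, M k c * v c) ^ 2 ≤ (∑ c, M k c ^ 2) * ∑ c, v c ^ 2 :=
        sum_mul_sq_le_sq_mul_sq _ _ _
    _ ≤ ∑ c, M k c ^ 2 :=
        mul_le_of_le_one_right (sum_nonneg fun c _ => sq_nonneg _) hv

lemma le_specNormSq_of_sum_sq_le_one {u : Fin C → ℝ} (hu : ∑ c, u c ^ 2 ≤ 1) :
    ∑ k, (∑ c, M k c * u c) ^ 2 ≤ specNormSq M :=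
  le_csSup ⟨_, by rintro _ ⟨v, hv, rfl⟩; exact sum_sq_apply_le_sum_sq M hv⟩ ⟨u, hu, rfl⟩

lemma specNormSq_nonneg : 0 ≤ specNormSq M := by
  simpa using le_specNormSq_of_sum_sq_le_one M (u := 0) (by simp)

lemma specNormSq_le_sum_sq : specNormSq M ≤ ∑ k, ∑ c, M k c ^ 2 :=
  csSup_le ⟨0, 0, by simp, by simp⟩ <| by
    rintro _ ⟨v, hv, rfl⟩
    exact sum_sq_apply_le_sum_sq M hv

lemma sum_sq_apply_le_specNormSq_mul (u : Fin C → ℝ) :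
    ∑ k, (∑ c, M k c * u c) ^ 2 ≤ specNormSq M * ∑ c, u c ^ 2 := by
  set U := ∑ c, u c ^ 2
  have hU0 : 0 ≤ U := sum_nonneg fun c _ => sq_nonneg (u c)
  rcases hU0.eq_or_lt with hU | hU
  · have hu : ∀ c, u c = 0 := fun c => by
      simpa using (sum_eq_zero_iff_of_nonneg fun c _ => sq_nonneg (u c)).1 hU.symm c
    simpa [hu] using mul_nonneg (specNormSq_nonneg M) hU0
  · have hs : Real.sqrt U ^ 2 = U := Real.sq_sqrt hU.le
    have hunit : ∑ c, (u c / Real.sqrt U) ^ 2 ≤ 1 := by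
      simp_rw [div_pow, ← sum_div, hs]
      exact (div_self hU.ne').le
    have hrow : ∀ k, ∑ c, M k c * (u c / Real.sqrt U) = (∑ c, M k c * u c) / Real.sqrt U :=
      fun k => by rw [sum_div]; exact sum_congr rfl fun c _ => by ring
    have hscale : ∑ k, (∑ c, M k c * (u c / Real.sqrt U)) ^ 2
        = (∑ k, (∑ c, M k c * u c) ^ 2) / U := by
      simp_rw [hrow, div_pow, hs, ← sum_div]
    have := le_specNormSq_of_sum_sq_le_one M hunit
    rwa [hscale, div_le_iff₀ hU] at this

lemma sum_sq_transpose_apply_le_specNormSq_mul (l : Fin K → ℝ) :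
    ∑ c, (∑ k, M k c * l k) ^ 2 ≤ specNormSq M * ∑ k, l k ^ 2 := by
  set w : Fin C → ℝ := fun c => ∑ k, M k c * l k
  set W := ∑ c, w c ^ 2
  have hW : W = ∑ k, l k * ∑ c, M k c * w c := by
    simp_rw [W, mul_sum]
    rw [sum_comm]
    refine sum_congr rfl fun c _ => ?_
    rw [sq]
    change (∑ k, M k c * l k) * w c = _
    rw [sum_mul]
    exact sum_congr rfl fun k _ => by ring
  -- `W = ⟨l, M w⟩`, so Cauchy–Schwarz and the bound on `‖M w‖₂²` give `W² ≤ ‖M‖₂² ‖l‖₂² W`.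
  have hsq : W * W ≤ (specNormSq M * ∑ k, l k ^ 2) * W := by
    calc W * W = W ^ 2 := (sq W).symm
      _ ≤ (∑ k, l k ^ 2) * ∑ k, (∑ c, M k c * w c) ^ 2 :=
          hW ▸ sum_mul_sq_le_sq_mul_sq _ _ _
      _ ≤ (∑ k, l k ^ 2) * (specNormSq M * W) :=
          mul_le_mul_of_nonneg_left (sum_sq_apply_le_specNormSq_mul M w)
            (sum_nonneg fun k _ => sq_nonneg _)
      _ = _ := by ring
  have hW_nonneg : 0 ≤ W := sum_nonneg fun c _ => sq_nonneg (w c)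
  rcases hW_nonneg.eq_or_lt with hW_zero | hWpos
  · exact hW_zero ▸ mul_nonneg (specNormSq_nonneg M) (sum_nonneg fun k _ => sq_nonneg _)
  · exact le_of_mul_le_mul_right hsq hWpos

omit M in
lemma continuous_specNormSq : Continuous (specNormSq : (Fin K → Fin C → ℝ) → ℝ) := by
  have hball : IsCompact {u : Fin C → ℝ | ∑ c, u c ^ 2 ≤ 1} := by
    refine Metric.isCompact_of_isClosed_isBounded
      (isClosed_le (by fun_prop) continuous_const) ?_
    refine (Metric.isBounded_closedBall (x := 0) (r := 1)).subset fun u hu => ?_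
    rw [mem_closedBall_zero_iff, pi_norm_le_iff_of_nonneg zero_le_one]
    intro c
    rw [Real.norm_eq_abs, ← sq_le_one_iff_abs_le_one]
    exact (single_le_sum (fun c _ => sq_nonneg (u c)) (mem_univ c)).trans hu
  exact hball.continuous_sSup (by fun_prop)

end SpecNormSq

section Regularizer

variable {α : Type*} [MeasurableSpace α] (P : Measure α) [IsProbabilityMeasure P]
  {K C : ℕ} (G : α → Fin K → Fin C → ℝ)

lemma integrable_specNormSq (hG_meas : ∀ k c, Measurable fun x => G x k c)
    (hG_bdd : ∃ M : ℝ, ∀ x k c, |G x k c| ≤ M) :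
    Integrable (fun x => specNormSq (G x)) P := by
  obtain ⟨M, hM⟩ := hG_bdd
  have hmeas : Measurable fun x => specNormSq (G x) :=
    continuous_specNormSq.measurable.comp (measurable_pi_iff.2 fun k => measurable_pi_iff.2
      fun c => hG_meas k c)
  refine Integrable.of_bound hmeas.aestronglyMeasurable (K * C * M ^ 2)
    (ae_of_all _ fun x => ?_)
  rw [Real.norm_eq_abs, abs_of_nonneg (specNormSq_nonneg _)]
  calc specNormSq (G x) ≤ ∑ k, ∑ c, G x k c ^ 2 := specNormSq_le_sum_sq _
    _ ≤ ∑ _k : Fin K, ∑ _c : Fin C, M ^ 2 :=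
        sum_le_sum fun k _ => sum_le_sum fun c _ => sq_le_sq' (abs_le.1 (hM x k c)).1
          (abs_le.1 (hM x k c)).2
    _ = K * C * M ^ 2 := by simp [mul_assoc]

lemma integral_regularizer_le (hG_meas : ∀ k c, Measurable fun x => G x k c)
    (hG_bdd : ∃ M : ℝ, ∀ x k c, |G x k c| ≤ M) (l : Fin K → ℝ) :
    ∫ x, ((∑ c, (∑ k, G x k c * l k) ^ 2) + ∑ k, l k ^ 2) ∂P
      ≤ (1 + ∫ x, specNormSq (G x) ∂P) * ∑ k, l k ^ 2 := by
  have hS := integrable_specNormSq P G hG_meas hG_bdd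
  have hF : Integrable (fun x => ∑ c, (∑ k, G x k c * l k) ^ 2) P := by
    refine (hS.mul_const (∑ k, l k ^ 2)).mono' ?_ (ae_of_all _ fun x => ?_)
    · refine Measurable.aestronglyMeasurable <| Finset.measurable_sum _ fun c _ => ?_
      exact (Finset.measurable_sum _ fun k _ => (hG_meas k c).mul_const _).pow_const 2
    · rw [Real.norm_eq_abs, abs_of_nonneg (sum_nonneg fun c _ => sq_nonneg _)]
      exact sum_sq_transpose_apply_le_specNormSq_mul (G x) l
  calc ∫ x, ((∑ c, (∑ k, G x k c * l k) ^ 2) + ∑ k, l k ^ 2) ∂P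
      = (∫ x, ∑ c, (∑ k, G x k c * l k) ^ 2 ∂P) + ∑ k, l k ^ 2 := by
        simp [integral_add hF (integrable_const _)]
    _ ≤ (∫ x, specNormSq (G x) * ∑ k, l k ^ 2 ∂P) + ∑ k, l k ^ 2 :=
        add_le_add_left (integral_mono hF (hS.mul_const _)
          fun x => sum_sq_transpose_apply_le_specNormSq_mul (G x) l) _
    _ = _ := by rw [integral_mul_const]; ring

end Regularizer

lemma sum_sq_le_sq_of_sum_abs_le {K : ℕ} {l : Fin K → ℝ} {r : ℝ} (h : ∑ k, |l k| ≤ r) :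
    ∑ k, l k ^ 2 ≤ r ^ 2 :=
  calc ∑ k, l k ^ 2 = ∑ k, |l k| ^ 2 := by simp_rw [sq_abs]
    _ ≤ (∑ k, |l k|) ^ 2 := sum_sq_le_sq_sum_of_nonneg fun k _ => abs_nonneg _
    _ ≤ r ^ 2 := pow_le_pow_left₀ (sum_nonneg fun k _ => abs_nonneg _) h 2

theorem regularization_bound_general (d K C : ℕ)
    (P : Measure (Fin d → ℝ)) [IsProbabilityMeasure P]
    (f : ℝ → ℝ)
    (G : (Fin d → ℝ) → Fin K → Fin C → ℝ)
    (hG_meas : ∀ k c, Measurable fun x => G x k c)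
    (hG_bdd : ∃ M : ℝ, ∀ x k c, |G x k c| ≤ M)
    (hbase : (Fin d → ℝ) → Fin C → ℝ)
    -- the unregularized dual value `D*`, attained at `λ*` with `‖λ*‖₁ ≤ λ_max`
    (lamStar : Fin K → ℝ) (hlamStar_nonneg : ∀ k, 0 ≤ lamStar k)
    (lamMax : ℝ) (hlamStar_l1 : ∑ k, |lamStar k| ≤ lamMax)
    -- constants
    (ζ : ℝ) (hζ : 0 < ζ)
    (gMean : ℝ) (hgMean : gMean = ∫ x, specNormSq (G x) ∂P)
    (θreg : ℝ) (hθreg : θreg = lamMax ^ 2 * (1 + gMean) / 2)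
    -- the regularized dual `A` and its unique minimizer `λ_ζ*`
    (A : (Fin K → ℝ) → ℝ)
    (hA : ∀ lam, A lam =
      (∫ x, fDivConj f (fun c => -∑ k, G x k c * lam k) (hbase x) ∂P) +
      (ζ / 2) * ∫ x, ((∑ c, (∑ k, G x k c * lam k) ^ 2) + ∑ k, lam k ^ 2) ∂P)
    (lamZeta : Fin K → ℝ)
    (hlamZeta_min : IsMinOn A {l : Fin K → ℝ | ∀ k, 0 ≤ l k} lamZeta) :
    (∫ x, fDivConj f (fun c => -∑ k, G x k c * lamZeta k) (hbase x) ∂P) ≤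
        A lamZeta ∧
    A lamZeta ≤
      (∫ x, fDivConj f (fun c => -∑ k, G x k c * lamStar k) (hbase x) ∂P) +
        θreg * ζ := by
  have hgMean_nonneg : 0 ≤ gMean := hgMean ▸ integral_nonneg fun x => specNormSq_nonneg (G x)
  refine ⟨?_, ?_⟩
  · rw [hA, le_add_iff_nonneg_right]
    exact mul_nonneg (half_pos hζ).le <| integral_nonneg fun x =>
      add_nonneg (sum_nonneg fun c _ => sq_nonneg _) (sum_nonneg fun k _ => sq_nonneg _)
  · calc A lamZeta ≤ A lamStar := hlamZeta_min hlamStar_nonneg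
      _ ≤ (∫ x, fDivConj f (fun c => -∑ k, G x k c * lamStar k) (hbase x) ∂P) +
          ζ / 2 * ((1 + gMean) * lamMax ^ 2) := by
        rw [hA]
        gcongr
        calc _ ≤ (1 + gMean) * ∑ k, lamStar k ^ 2 :=
              hgMean ▸ integral_regularizer_le P G hG_meas hG_bdd lamStar
          _ ≤ _ := mul_le_mul_of_nonneg_left (sum_sq_le_sq_of_sum_abs_le hlamStar_l1)
              (by linarith)
      _ = _ := by rw [hθreg]; ring

/-- Lemma 7 of the paper: with `θ_reg = λ_max²(1 + g_mean)/2`,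
the unique minimizer `λ_ζ*` of the regularized dual `A` satisfies
`E[D_f^conj(−G(X)ᵀλ_ζ*, h_base(X))] ≤ D_ζ* ≤ D* + θ_reg ζ`. -/
theorem regularization_bound (d K C : ℕ)
    (hd : 0 < d) (hK : 0 < K) (hC : 0 < C)
    (P : Measure (Fin d → ℝ)) [IsProbabilityMeasure P]
    (f f' f'' : ℝ → ℝ)
    (hf_deriv : ∀ t ∈ Set.Ioi (0 : ℝ), HasDerivAt f (f' t) t)
    (hf_deriv2 : ∀ t ∈ Set.Ioi (0 : ℝ), HasDerivAt f' (f'' t) t)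
    (hf''_cont : ContinuousOn f'' (Set.Ioi 0))
    (hf''_pos : ∀ t ∈ Set.Ioi (0 : ℝ), 0 < f'' t)
    (hf_one : f 1 = 0)
    (hf'_atBot : Filter.Tendsto f' (nhdsWithin 0 (Set.Ioi 0)) Filter.atBot)
    (G : (Fin d → ℝ) → Fin K → Fin C → ℝ)
    (hG_meas : ∀ k c, Measurable fun x => G x k c)
    (hG_bdd : ∃ M : ℝ, ∀ x k c, |G x k c| ≤ M)
    (hbase : (Fin d → ℝ) → Fin C → ℝ)
    (hbase_meas : ∀ c, Measurable fun x => hbase x c)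
    (hbase_simplex : ∀ x, hbase x ∈ simplex C)
    (hbase_pos : ∃ ε > (0 : ℝ), ∀ x c, ε ≤ hbase x c)
    -- the unregularized dual value `D*`, attained at `λ*` with `‖λ*‖₁ ≤ λ_max`
    (lamStar : Fin K → ℝ) (hlamStar_nonneg : ∀ k, 0 ≤ lamStar k)
    (hlamStar_min : IsMinOn
      (fun l : Fin K → ℝ =>
        ∫ x, fDivConj f (fun c => -∑ k, G x k c * l k) (hbase x) ∂P)
      {l : Fin K → ℝ | ∀ k, 0 ≤ l k} lamStar)
    (lamMax : ℝ) (hlamMax : 0 ≤ lamMax) (hlamStar_l1 : ∑ k, |lamStar k| ≤ lamMax)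
    -- constants
    (ζ : ℝ) (hζ : 0 < ζ)
    (gMean : ℝ) (hgMean : gMean = ∫ x, specNormSq (G x) ∂P)
    (θreg : ℝ) (hθreg : θreg = lamMax ^ 2 * (1 + gMean) / 2)
    -- the regularized dual `A` and its unique minimizer `λ_ζ*`
    (A : (Fin K → ℝ) → ℝ)
    (hA : ∀ lam, A lam =
      (∫ x, fDivConj f (fun c => -∑ k, G x k c * lam k) (hbase x) ∂P) +
      (ζ / 2) * ∫ x, ((∑ c, (∑ k, G x k c * lam k) ^ 2) + ∑ k, lam k ^ 2) ∂P)
    (lamZeta : Fin K → ℝ) (hlamZeta_nonneg : ∀ k, 0 ≤ lamZeta k)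
    (hlamZeta_min : IsMinOn A {l : Fin K → ℝ | ∀ k, 0 ≤ l k} lamZeta) :
    (∫ x, fDivConj f (fun c => -∑ k, G x k c * lamZeta k) (hbase x) ∂P) ≤
        A lamZeta ∧
    A lamZeta ≤
      (∫ x, fDivConj f (fun c => -∑ k, G x k c * lamStar k) (hbase x) ∂P) +
        θreg * ζ :=
  regularization_bound_general d K C P f G hG_meas hG_bdd hbase lamStar hlamStar_nonneg lamMax
    hlamStar_l1 ζ hζ gMean hgMean θreg hθreg A hA lamZeta hlamZeta_min
end

section
/- Fix a positive integer C, a real ξ > 1/4, and b ∈ ℝ^C, and define the map θ : ℝ^C → ℝ^C by θ(z) := −(1/(2ξ)) (σ(z) + b), where σ is the softmax function. Then θ is Lipschitz with constant 1/(4ξ) < 1 with respect to the Euclidean norm; consequently θ has a unique fixed point z*, and for every initial point z₀ the iterates z_m := θ^{(m)}(z₀) satisfy ‖z_m − z*‖₂ ≤ (1/(4ξ))^m ‖z₀ − z*‖₂. Moreover, z* is the unique global minimizer of the strictly convex function z ↦ log( Σ_{c=1}^C e^{z_c} ) + ξ ‖z‖₂² + bᵀz. -/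
/-- The softmax function `σ : ℝ^C → ℝ^C`. -/
noncomputable def softmax {C : ℕ} (z : Fin C → ℝ) : Fin C → ℝ :=
  fun j => Real.exp (z j) / ∑ i, Real.exp (z i)

/-- The map `θ(z) = −(1/(2ξ))(σ(z) + b)`. -/
noncomputable def thetaMap {C : ℕ} (ξ : ℝ) (b : Fin C → ℝ) (z : Fin C → ℝ) :
    Fin C → ℝ :=
  fun c => -(1 / (2 * ξ)) * (softmax z c + b c)

/-- The strictly convex potential `z ↦ log ∑_c e^{z_c} + ξ‖z‖₂² + bᵀz`. -/
noncomputable def potential {C : ℕ} (ξ : ℝ) (b : Fin C → ℝ) (z : Fin C → ℝ) : ℝ :=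
  Real.log (∑ c, Real.exp (z c)) + ξ * ∑ c, z c ^ 2 + ∑ c, b c * z c

lemma sum_exp_pos {C : ℕ} (hC : 0 < C) (z : Fin C → ℝ) : 0 < ∑ i, Real.exp (z i) :=
  Finset.sum_pos (fun i _ => Real.exp_pos _) ⟨⟨0, hC⟩, Finset.mem_univ _⟩

lemma softmax_nonneg {C : ℕ} (z : Fin C → ℝ) (j : Fin C) : 0 ≤ softmax z j := by
  have : 0 ≤ ∑ i, Real.exp (z i) := Finset.sum_nonneg fun i _ => (Real.exp_pos _).le
  exact div_nonneg (Real.exp_pos _).le this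

lemma softmax_sum {C : ℕ} (hC : 0 < C) (z : Fin C → ℝ) : ∑ j, softmax z j = 1 := by
  simp only [softmax, ← Finset.sum_div]
  exact div_self (ne_of_gt (sum_exp_pos hC z))

lemma jac_bound {C : ℕ} (p v : Fin C → ℝ)
    (hp0 : ∀ j, 0 ≤ p j) (hp1 : ∑ j, p j = 1) :
    ∑ j, (p j * v j - p j * ∑ i, p i * v i) ^ 2 ≤ (1 / 4) * ∑ j, v j ^ 2 := by
  have huniv : (Finset.univ : Finset (Fin C)).Nonempty := by
    by_contra h
    rw [Finset.not_nonempty_iff_eq_empty] at h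
    rw [h, Finset.sum_empty] at hp1
    norm_num at hp1
  set vb := ∑ i, p i * v i with hvb
  set u : Fin C → ℝ := fun j => v j - vb with hu
  have hterm : ∀ j, p j * v j - p j * vb = p j * u j := fun j => by simp only [hu]; ring
  have h0 : ∑ j, p j * u j = 0 := by
    simp only [hu, mul_sub, Finset.sum_sub_distrib, ← Finset.sum_mul, hp1]
    simp [hvb]
  set s := ∑ j, p j * |u j| with hs
  have hs0 : 0 ≤ s := Finset.sum_nonneg fun j _ => mul_nonneg (hp0 j) (abs_nonneg _)
  have hstep1 : ∀ j, 2 * (p j * |u j|) ≤ s := by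
    intro j
    have hsplit : p j * u j + ∑ i ∈ Finset.univ.erase j, p i * u i = 0 := by
      exact (Finset.add_sum_erase Finset.univ (fun i => p i * u i) (Finset.mem_univ j)).trans h0
    have h1 : p j * u j = -(∑ i ∈ Finset.univ.erase j, p i * u i) := by linarith
    have h2 : |p j * u j| ≤ ∑ i ∈ Finset.univ.erase j, p i * |u i| := by
      rw [h1, abs_neg]
      refine (Finset.abs_sum_le_sum_abs _ _).trans (le_of_eq ?_)
      exact Finset.sum_congr rfl fun i _ => by rw [abs_mul, abs_of_nonneg (hp0 i)]
    have h3 : p j * |u j| + ∑ i ∈ Finset.univ.erase j, p i * |u i| = s := by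
      exact Finset.add_sum_erase Finset.univ (fun i => p i * |u i|) (Finset.mem_univ j)
    have h4 : p j * |u j| = |p j * u j| := by rw [abs_mul, abs_of_nonneg (hp0 j)]
    linarith
  have hstep2 : ∑ j, (p j * u j) ^ 2 ≤ s / 2 * s := by
    calc ∑ j, (p j * u j) ^ 2 ≤ ∑ j, s / 2 * (p j * |u j|) := by
          refine Finset.sum_le_sum fun j _ => ?_
          have h4 : (p j * u j) ^ 2 = (p j * |u j|) ^ 2 := by
            rw [← sq_abs (p j * u j), abs_mul, abs_of_nonneg (hp0 j)]
          rw [h4, pow_two]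
          have := hstep1 j
          have hnn : 0 ≤ p j * |u j| := mul_nonneg (hp0 j) (abs_nonneg _)
          nlinarith
      _ = s / 2 * s := by rw [← Finset.mul_sum]
  have hstep3 : s ^ 2 ≤ ∑ j, p j * u j ^ 2 := by
    have hcs := Finset.sum_mul_sq_le_sq_mul_sq Finset.univ
      (fun j => Real.sqrt (p j)) (fun j => Real.sqrt (p j) * |u j|)
    have e1 : ∀ j : Fin C, Real.sqrt (p j) * (Real.sqrt (p j) * |u j|) = p j * |u j| := fun j => by
      rw [← mul_assoc, Real.mul_self_sqrt (hp0 j)]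
    have e2 : ∀ j : Fin C, Real.sqrt (p j) ^ 2 = p j := fun j => Real.sq_sqrt (hp0 j)
    have e3 : ∀ j : Fin C, (Real.sqrt (p j) * |u j|) ^ 2 = p j * u j ^ 2 := fun j => by
      rw [mul_pow, Real.sq_sqrt (hp0 j), sq_abs]
    rw [Finset.sum_congr rfl fun j _ => e1 j, Finset.sum_congr rfl fun j _ => e2 j,
      Finset.sum_congr rfl fun j _ => e3 j, hp1, one_mul] at hcs
    exact hcs
  have hstep4 : ∑ j, p j * u j ^ 2 ≤ (1 / 2) * ∑ j, v j ^ 2 := by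
    obtain ⟨M, -, hM⟩ := Finset.exists_max_image Finset.univ v huniv
    obtain ⟨m, -, hm⟩ := Finset.exists_min_image Finset.univ v huniv
    set cc := (v M + v m) / 2 with hcc
    have hA : ∑ j, p j * u j ^ 2 ≤ ∑ j, p j * (v j - cc) ^ 2 := by
      have expand : ∑ j, p j * (v j - cc) ^ 2
          = ∑ j, p j * u j ^ 2 + 2 * (vb - cc) * ∑ j, p j * u j + (vb - cc) ^ 2 * ∑ j, p j := by
        rw [Finset.mul_sum, Finset.mul_sum, ← Finset.sum_add_distrib, ← Finset.sum_add_distrib]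
        refine Finset.sum_congr rfl fun j _ => ?_
        simp only [hu]; ring
      rw [expand, h0, hp1]
      nlinarith [sq_nonneg (vb - cc)]
    have hB : ∀ j : Fin C, (v j - cc) ^ 2 ≤ ((v M - v m) / 2) ^ 2 := by
      intro j
      have h1 := hM j (Finset.mem_univ j)
      have h2 := hm j (Finset.mem_univ j)
      have hprod : 0 ≤ (v M - v j) * (v j - v m) :=
        mul_nonneg (by linarith) (by linarith)
      simp only [hcc]; nlinarith
    have hC2 : ∑ j, p j * (v j - cc) ^ 2 ≤ ((v M - v m) / 2) ^ 2 := by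
      calc ∑ j, p j * (v j - cc) ^ 2 ≤ ∑ j, p j * ((v M - v m) / 2) ^ 2 :=
            Finset.sum_le_sum fun j _ => mul_le_mul_of_nonneg_left (hB j) (hp0 j)
        _ = ((v M - v m) / 2) ^ 2 := by rw [← Finset.sum_mul, hp1, one_mul]
    have hD : ((v M - v m) / 2) ^ 2 ≤ (1 / 2) * ∑ j, v j ^ 2 := by
      by_cases hMm : M = m
      · subst hMm
        simp only [sub_self]
        have : 0 ≤ ∑ j, v j ^ 2 := Finset.sum_nonneg fun j _ => sq_nonneg _
        norm_num; linarith
      · have hsum2 : v M ^ 2 + v m ^ 2 ≤ ∑ j, v j ^ 2 := by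
          calc v M ^ 2 + v m ^ 2 = ∑ j ∈ ({M, m} : Finset (Fin C)), v j ^ 2 := by
                rw [Finset.sum_pair hMm]
            _ ≤ ∑ j, v j ^ 2 := Finset.sum_le_sum_of_subset_of_nonneg
                (Finset.subset_univ _) (fun _ _ _ => sq_nonneg _)
        nlinarith [sq_nonneg (v M + v m)]
    linarith
  calc ∑ j, (p j * v j - p j * vb) ^ 2 = ∑ j, (p j * u j) ^ 2 :=
        Finset.sum_congr rfl fun j _ => by rw [hterm j]
    _ ≤ s / 2 * s := hstep2
    _ ≤ (1 / 4) * ∑ j, v j ^ 2 := by nlinarith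

lemma softmax_line_hasDerivAt {C : ℕ} (hC : 0 < C) (z v : Fin C → ℝ) (j : Fin C) (t : ℝ) :
    HasDerivAt (fun s : ℝ => softmax (fun i => z i + s * v i) j)
      (softmax (fun i => z i + t * v i) j * v j -
        softmax (fun i => z i + t * v i) j *
          ∑ i, softmax (fun i' => z i' + t * v i') i * v i) t := by
  set a : Fin C → ℝ := fun i => z i + t * v i with ha
  have hN : ∀ i : Fin C, HasDerivAt (fun s : ℝ => Real.exp (z i + s * v i))
      (Real.exp (a i) * v i) t := by
    intro i
    have h1 : HasDerivAt (fun s : ℝ => z i + s * v i) (v i) t := by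
      simpa using ((hasDerivAt_id t).mul_const (v i)).const_add (z i)
    simpa using h1.exp
  have hS : HasDerivAt (fun s : ℝ => ∑ i, Real.exp (z i + s * v i))
      (∑ i, Real.exp (a i) * v i) t := HasDerivAt.fun_sum fun i _ => hN i
  have hSpos : 0 < ∑ i, Real.exp (a i) := sum_exp_pos hC a
  have hdiv := (hN j).div hS (ne_of_gt hSpos)
  have heq : softmax a j * v j - softmax a j * ∑ i, softmax a i * v i
      = (Real.exp (a j) * v j * ∑ i, Real.exp (a i)
          - Real.exp (a j) * ∑ i, Real.exp (a i) * v i) / (∑ i, Real.exp (a i)) ^ 2 := by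
    have e1 : ∑ i, softmax a i * v i = (∑ i, Real.exp (a i) * v i) / ∑ i, Real.exp (a i) := by
      simp only [softmax, div_mul_eq_mul_div, Finset.sum_div]
    rw [e1]
    simp only [softmax]
    field_simp
  rw [heq]
  exact hdiv

lemma softmax_sqrt_lip {C : ℕ} (hC : 0 < C) (z z' : Fin C → ℝ) :
    Real.sqrt (∑ c, (softmax z c - softmax z' c) ^ 2) ≤
      (1 / 2) * Real.sqrt (∑ c, (z c - z' c) ^ 2) := by
  set w : Fin C → ℝ := fun c => softmax z c - softmax z' c with hw
  set v : Fin C → ℝ := fun c => z c - z' c with hv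
  set W := ∑ c, w c ^ 2 with hWdef
  set V := ∑ c, v c ^ 2 with hVdef
  have hW0 : 0 ≤ W := Finset.sum_nonneg fun c _ => sq_nonneg _
  have hV0 : 0 ≤ V := Finset.sum_nonneg fun c _ => sq_nonneg _
  have hderiv : ∀ s : ℝ, HasDerivAt (fun r : ℝ => ∑ j, w j * softmax (fun i => z' i + r * v i) j)
      (∑ j, w j * (softmax (fun i => z' i + s * v i) j * v j -
        softmax (fun i => z' i + s * v i) j *
          ∑ i, softmax (fun i' => z' i' + s * v i') i * v i)) s := fun s =>
    HasDerivAt.fun_sum fun j _ => (softmax_line_hasDerivAt hC z' v j s).const_mul (w j)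
  obtain ⟨c, hc, hceq⟩ := exists_hasDerivAt_eq_slope
    (fun r : ℝ => ∑ j, w j * softmax (fun i => z' i + r * v i) j) _ one_pos
    (fun x _ => (hderiv x).continuousAt.continuousWithinAt) (fun x _ => hderiv x)
  set p : Fin C → ℝ := fun i => softmax (fun i' => z' i' + c * v i') i with hp
  have hp0 : ∀ j, 0 ≤ p j := fun j => softmax_nonneg _ j
  have hp1 : ∑ j, p j = 1 := softmax_sum hC _
  have hone : (fun i => z' i + 1 * v i) = z := by funext i; simp [hv]
  have hzero : (fun i => z' i + 0 * v i) = z' := by funext i; simp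
  have hW : (∑ j, w j * softmax (fun i => z' i + (1:ℝ) * v i) j)
      - (∑ j, w j * softmax (fun i => z' i + (0:ℝ) * v i) j) = W := by
    rw [hone, hzero, ← Finset.sum_sub_distrib]
    exact Finset.sum_congr rfl fun j _ => by rw [hw]; ring
  have hD : W = ∑ j, w j * (p j * v j - p j * ∑ i, p i * v i) := by
    rw [← hW]
    rw [hceq]
    norm_num
  have hJ := jac_bound p v hp0 hp1
  have hCS := Finset.sum_mul_sq_le_sq_mul_sq Finset.univ w
    (fun j => p j * v j - p j * ∑ i, p i * v i)
  have hW2 : W ^ 2 ≤ W * ((1 / 4) * V) := by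
    calc W ^ 2 = (∑ j, w j * (p j * v j - p j * ∑ i, p i * v i)) ^ 2 := by rw [← hD]
      _ ≤ (∑ j, w j ^ 2) * ∑ j, (p j * v j - p j * ∑ i, p i * v i) ^ 2 := hCS
      _ ≤ W * ((1 / 4) * V) := mul_le_mul_of_nonneg_left hJ hW0
  have hWle : W ≤ (1 / 4) * V := by
    rcases eq_or_lt_of_le hW0 with h | h
    · rw [← h]; positivity
    · nlinarith
  calc Real.sqrt W ≤ Real.sqrt ((1 / 4) * V) := Real.sqrt_le_sqrt hWle
    _ = (1 / 2) * Real.sqrt V := by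
        rw [show (1 / 4 : ℝ) = (1 / 2) ^ 2 by norm_num, Real.sqrt_mul (sq_nonneg _),
          Real.sqrt_sq (by norm_num : (0:ℝ) ≤ 1 / 2)]

lemma theta_sqrt_lip {C : ℕ} (hC : 0 < C) {ξ : ℝ} (hξ : 1 / 4 < ξ) (b : Fin C → ℝ)
    (z z' : Fin C → ℝ) :
    Real.sqrt (∑ c, (thetaMap ξ b z c - thetaMap ξ b z' c) ^ 2) ≤
      (1 / (4 * ξ)) * Real.sqrt (∑ c, (z c - z' c) ^ 2) := by
  have hξ0 : 0 < ξ := lt_trans (by norm_num) hξ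
  have h1 : ∀ c, (thetaMap ξ b z c - thetaMap ξ b z' c) ^ 2
      = (1 / (2 * ξ)) ^ 2 * (softmax z c - softmax z' c) ^ 2 := by
    intro c; simp only [thetaMap]; ring
  rw [Finset.sum_congr rfl fun c _ => h1 c, ← Finset.mul_sum,
    Real.sqrt_mul (sq_nonneg _), Real.sqrt_sq (by positivity : (0:ℝ) ≤ 1 / (2 * ξ))]
  calc 1 / (2 * ξ) * Real.sqrt (∑ c, (softmax z c - softmax z' c) ^ 2)
      ≤ 1 / (2 * ξ) * ((1 / 2) * Real.sqrt (∑ c, (z c - z' c) ^ 2)) :=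
        mul_le_mul_of_nonneg_left (softmax_sqrt_lip hC z z') (by positivity)
    _ = (1 / (4 * ξ)) * Real.sqrt (∑ c, (z c - z' c) ^ 2) := by
        ring

lemma logsumexp_convex {C : ℕ} (hC : 0 < C) :
    ConvexOn ℝ Set.univ (fun z : Fin C → ℝ => Real.log (∑ c, Real.exp (z c))) := by
  refine ⟨convex_univ, ?_⟩
  intro x _ y _ a e ha he hae
  have hSx := sum_exp_pos hC x
  have hSy := sum_exp_pos hC y
  rcases eq_or_lt_of_le ha with ha0 | ha
  · have he1 : e = 1 := by linarith
    have : a • x + e • y = y := by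
      funext i; simp [← ha0, he1]
    rw [this, ← ha0, he1]; simp
  rcases eq_or_lt_of_le he with he0 | he
  · have ha1 : a = 1 := by linarith
    have : a • x + e • y = x := by
      funext i; simp [← he0, ha1]
    rw [this, ← he0, ha1]; simp
  have hmid : ∀ i, (a • x + e • y) i = a * x i + e * y i := fun i => by
    simp [Pi.smul_apply, smul_eq_mul]
  have hkey : ∑ i, Real.exp (a * x i + e * y i)
      ≤ (∑ i, Real.exp (x i)) ^ a * (∑ i, Real.exp (y i)) ^ e := by
    set Sx := ∑ i, Real.exp (x i) with hSxd
    set Sy := ∑ i, Real.exp (y i) with hSyd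
    have hDpos : 0 < Sx ^ a * Sy ^ e :=
      mul_pos (Real.rpow_pos_of_pos hSx a) (Real.rpow_pos_of_pos hSy e)
    have hper : ∀ i : Fin C, Real.exp (a * x i + e * y i) / (Sx ^ a * Sy ^ e)
        ≤ a * (Real.exp (x i) / Sx) + e * (Real.exp (y i) / Sy) := by
      intro i
      have hgm := Real.geom_mean_le_arith_mean2_weighted ha.le he.le
        (div_nonneg (Real.exp_pos (x i)).le hSx.le)
        (div_nonneg (Real.exp_pos (y i)).le hSy.le) hae
      have e1 : (Real.exp (x i) / Sx) ^ a = Real.exp (a * x i) / Sx ^ a := by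
        rw [Real.div_rpow (Real.exp_pos _).le hSx.le, ← Real.exp_mul, mul_comm]
      have e2 : (Real.exp (y i) / Sy) ^ e = Real.exp (e * y i) / Sy ^ e := by
        rw [Real.div_rpow (Real.exp_pos _).le hSy.le, ← Real.exp_mul, mul_comm]
      calc Real.exp (a * x i + e * y i) / (Sx ^ a * Sy ^ e)
          = (Real.exp (x i) / Sx) ^ a * (Real.exp (y i) / Sy) ^ e := by
            rw [e1, e2, Real.exp_add, div_mul_div_comm]
        _ ≤ a * (Real.exp (x i) / Sx) + e * (Real.exp (y i) / Sy) := hgm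
    have hsum : (∑ i, Real.exp (a * x i + e * y i)) / (Sx ^ a * Sy ^ e) ≤ 1 := by
      rw [Finset.sum_div]
      calc ∑ i, Real.exp (a * x i + e * y i) / (Sx ^ a * Sy ^ e)
          ≤ ∑ i, (a * (Real.exp (x i) / Sx) + e * (Real.exp (y i) / Sy)) :=
            Finset.sum_le_sum fun i _ => hper i
        _ = a * (Sx / Sx) + e * (Sy / Sy) := by
            rw [Finset.sum_add_distrib]
            simp only [mul_div_assoc, ← Finset.mul_sum, ← Finset.sum_div]
            rw [← hSxd, ← hSyd]
        _ = 1 := by rw [div_self (ne_of_gt hSx), div_self (ne_of_gt hSy)]; linarith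
    exact (div_le_one hDpos).mp hsum
  have hmidpos : 0 < ∑ i, Real.exp (a * x i + e * y i) :=
    Finset.sum_pos (fun i _ => Real.exp_pos _) ⟨⟨0, hC⟩, Finset.mem_univ _⟩
  have hlog := Real.log_le_log hmidpos hkey
  rw [Real.log_mul (ne_of_gt (Real.rpow_pos_of_pos hSx a))
    (ne_of_gt (Real.rpow_pos_of_pos hSy e)), Real.log_rpow hSx, Real.log_rpow hSy] at hlog
  simp only [smul_eq_mul]
  calc Real.log (∑ c, Real.exp ((a • x + e • y) c))
      = Real.log (∑ i, Real.exp (a * x i + e * y i)) := by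
        exact congrArg Real.log (Finset.sum_congr rfl fun i _ => by rw [hmid i])
    _ ≤ a * Real.log (∑ c, Real.exp (x c)) + e * Real.log (∑ c, Real.exp (y c)) := hlog

lemma sqsum_strictconvex {C : ℕ} {ξ : ℝ} (hξ0 : 0 < ξ) :
    StrictConvexOn ℝ Set.univ (fun z : Fin C → ℝ => ξ * ∑ c, z c ^ 2) := by
  refine ⟨convex_univ, ?_⟩
  intro x _ y _ hxy a e ha he hae
  obtain ⟨c₀, hc₀⟩ := Function.ne_iff.mp hxy
  have hle : ∀ c : Fin C, ((a • x + e • y) c) ^ 2 ≤ a * x c ^ 2 + e * y c ^ 2 := by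
    intro c
    simp only [Pi.add_apply, Pi.smul_apply, smul_eq_mul]
    nlinarith [mul_nonneg (mul_pos ha he).le (sq_nonneg (x c - y c))]
  have hstrict : ((a • x + e • y) c₀) ^ 2 < a * x c₀ ^ 2 + e * y c₀ ^ 2 := by
    simp only [Pi.add_apply, Pi.smul_apply, smul_eq_mul]
    have h1 : 0 < (x c₀ - y c₀) ^ 2 := by
      have := sub_ne_zero.mpr hc₀
      positivity
    nlinarith [mul_pos (mul_pos ha he) h1]
  have hlt : ∑ c, ((a • x + e • y) c) ^ 2 < a * ∑ c, x c ^ 2 + e * ∑ c, y c ^ 2 := by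
    calc ∑ c, ((a • x + e • y) c) ^ 2 < ∑ c, (a * x c ^ 2 + e * y c ^ 2) :=
          Finset.sum_lt_sum (fun c _ => hle c) ⟨c₀, Finset.mem_univ _, hstrict⟩
      _ = a * ∑ c, x c ^ 2 + e * ∑ c, y c ^ 2 := by
          rw [Finset.sum_add_distrib, Finset.mul_sum, Finset.mul_sum]
  simp only [smul_eq_mul]
  nlinarith [mul_lt_mul_of_pos_left hlt hξ0]

lemma potential_strictconvex {C : ℕ} (hC : 0 < C) {ξ : ℝ} (hξ0 : 0 < ξ) (b : Fin C → ℝ) :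
    StrictConvexOn ℝ Set.univ (potential ξ b) := by
  have h1 := logsumexp_convex (C := C) hC
  have h2 := sqsum_strictconvex (C := C) hξ0
  refine ⟨convex_univ, ?_⟩
  intro x hx y hy hxy a e ha he hae
  have e1 := h1.2 (Set.mem_univ x) (Set.mem_univ y) ha.le he.le hae
  have e2 := h2.2 (Set.mem_univ x) (Set.mem_univ y) hxy ha he hae
  have e3 : ∑ c, b c * ((a • x + e • y) c)
      = a * ∑ c, b c * x c + e * ∑ c, b c * y c := by
    rw [Finset.mul_sum, Finset.mul_sum, ← Finset.sum_add_distrib]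
    refine Finset.sum_congr rfl fun c _ => ?_
    simp only [Pi.add_apply, Pi.smul_apply, smul_eq_mul]
    ring
  simp only [smul_eq_mul] at e1 e2 ⊢
  simp only [potential]
  linarith

lemma convex_min_of_deriv_zero {g : ℝ → ℝ} (hg : ConvexOn ℝ Set.univ g)
    (hd : HasDerivAt g 0 0) {t : ℝ} (ht : 0 < t) : g 0 ≤ g t := by
  have hslope := hasDerivAt_iff_tendsto_slope.mp hd
  have htend : Filter.Tendsto (slope g 0) (nhdsWithin 0 (Set.Ioi 0)) (nhds 0) :=
    hslope.mono_left (nhdsWithin_mono 0 fun x hx => ne_of_gt hx)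
  have hev : ∀ᶠ s in nhdsWithin 0 (Set.Ioi 0), slope g 0 s ≤ slope g 0 t := by
    filter_upwards [Ioo_mem_nhdsGT_of_mem (Set.mem_Ico.mpr ⟨le_refl 0, ht⟩)] with s hs
    have := hg.secant_mono (Set.mem_univ 0) (Set.mem_univ s) (Set.mem_univ t)
      (ne_of_gt hs.1) (ne_of_gt ht) hs.2.le
    simpa [slope_def_field] using this
  have h0le : (0 : ℝ) ≤ slope g 0 t := le_of_tendsto htend hev
  rw [slope_def_field] at h0le
  have h2 : 0 ≤ g t - g 0 := by
    have := mul_nonneg h0le (by linarith : (0:ℝ) ≤ t - 0)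
    rwa [div_mul_cancel₀ _ (by linarith : t - (0:ℝ) ≠ 0)] at this
  linarith

lemma potential_line_hasDerivAt {C : ℕ} (hC : 0 < C) (ξ : ℝ) (b zs v : Fin C → ℝ) :
    HasDerivAt (fun t : ℝ => potential ξ b (fun c => zs c + t * v c))
      (∑ c, (softmax zs c + 2 * ξ * zs c + b c) * v c) 0 := by
  have hS : 0 < ∑ i, Real.exp (zs i) := sum_exp_pos hC zs
  have hline : ∀ c : Fin C, HasDerivAt (fun t : ℝ => zs c + t * v c) (v c) 0 := fun c => by
    simpa using ((hasDerivAt_id 0).mul_const (v c)).const_add (zs c)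
  have hsum : HasDerivAt (fun t : ℝ => ∑ i, Real.exp (zs i + t * v i))
      (∑ i, Real.exp (zs i) * v i) 0 := by
    refine HasDerivAt.fun_sum fun i _ => ?_
    simpa using (hline i).exp
  have hlog : HasDerivAt (fun t : ℝ => Real.log (∑ i, Real.exp (zs i + t * v i)))
      ((∑ i, Real.exp (zs i) * v i) / ∑ i, Real.exp (zs i)) 0 := by
    have h := hsum.log (by simpa using ne_of_gt hS)
    simpa using h
  have hsq : HasDerivAt (fun t : ℝ => ξ * ∑ c, (zs c + t * v c) ^ 2)
      (ξ * ∑ c, 2 * zs c * v c) 0 := by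
    refine HasDerivAt.const_mul ξ (HasDerivAt.fun_sum fun c _ => ?_)
    simpa using (hline c).fun_pow 2
  have hlin : HasDerivAt (fun t : ℝ => ∑ c, b c * (zs c + t * v c))
      (∑ c, b c * v c) 0 := HasDerivAt.fun_sum fun c _ => (hline c).const_mul (b c)
  have hall := (hlog.add hsq).add hlin
  have heq : ∑ c, (softmax zs c + 2 * ξ * zs c + b c) * v c
      = (∑ i, Real.exp (zs i) * v i) / (∑ i, Real.exp (zs i))
        + ξ * ∑ c, 2 * zs c * v c + ∑ c, b c * v c := by
    have e0 : ∑ c, softmax zs c * v c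
        = (∑ i, Real.exp (zs i) * v i) / ∑ i, Real.exp (zs i) := by
      simp only [softmax, div_mul_eq_mul_div, Finset.sum_div]
    have e1 : ∑ c, (softmax zs c + 2 * ξ * zs c + b c) * v c
        = ∑ c, softmax zs c * v c + (ξ * ∑ c, 2 * zs c * v c + ∑ c, b c * v c) := by
      rw [Finset.mul_sum, ← Finset.sum_add_distrib, ← Finset.sum_add_distrib]
      exact Finset.sum_congr rfl fun c _ => by ring
    rw [e1, e0]; ring
  rw [heq]
  exact hall

/-- for `ξ > 1/4`, the map `θ(z) = −(1/(2ξ))(σ(z) + b)` is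
`1/(4ξ)`-Lipschitz (with `1/(4ξ) < 1`) in the Euclidean norm, so it has a unique
fixed point `z*`, the iterates converge exponentially, and `z*` is the unique
global minimizer of the strictly convex function
`z ↦ log ∑_c e^{z_c} + ξ‖z‖₂² + bᵀz`. -/
theorem fixed_point_iteration (C : ℕ) (hC : 0 < C) (ξ : ℝ) (hξ : 1 / 4 < ξ)
    (b : Fin C → ℝ) :
    (∀ z z' : Fin C → ℝ,
      Real.sqrt (∑ c, (thetaMap ξ b z c - thetaMap ξ b z' c) ^ 2) ≤
        (1 / (4 * ξ)) * Real.sqrt (∑ c, (z c - z' c) ^ 2)) ∧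
    1 / (4 * ξ) < 1 ∧
    ∃ zstar : Fin C → ℝ,
      thetaMap ξ b zstar = zstar ∧
      (∀ z' : Fin C → ℝ, thetaMap ξ b z' = z' → z' = zstar) ∧
      (∀ (z₀ : Fin C → ℝ) (m : ℕ),
        Real.sqrt (∑ c, ((thetaMap ξ b)^[m] z₀ c - zstar c) ^ 2) ≤
          (1 / (4 * ξ)) ^ m * Real.sqrt (∑ c, (z₀ c - zstar c) ^ 2)) ∧
      StrictConvexOn ℝ Set.univ (potential ξ b) ∧
      (∀ z : Fin C → ℝ, z ≠ zstar → potential ξ b zstar < potential ξ b z) := by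
  have hξ0 : 0 < ξ := lt_trans (by norm_num) hξ
  have hξne : ξ ≠ 0 := ne_of_gt hξ0
  have h4ξ : (1:ℝ) < 4 * ξ := by linarith
  refine ⟨fun z z' => theta_sqrt_lip hC hξ b z z',
    by rw [div_lt_one (by linarith)]; linarith, ?_⟩
  -- Banach fixed point in Euclidean space
  let f : EuclideanSpace ℝ (Fin C) → EuclideanSpace ℝ (Fin C) := fun x => WithLp.toLp 2 (thetaMap ξ b x)
  have hK0 : (0:ℝ) ≤ 1 / (4 * ξ) := by positivity
  have hdist : ∀ x y : EuclideanSpace ℝ (Fin C),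
      dist (f x) (f y) ≤ (1 / (4 * ξ)) * dist x y := by
    intro x y
    rw [EuclideanSpace.dist_eq, EuclideanSpace.dist_eq]
    simp only [f, Real.dist_eq, sq_abs, WithLp.ofLp_toLp]
    exact theta_sqrt_lip hC hξ b x y
  have hlip : LipschitzWith ⟨1 / (4 * ξ), hK0⟩ f := LipschitzWith.of_dist_le_mul hdist
  have hcontr : ContractingWith ⟨1 / (4 * ξ), hK0⟩ f := by
    refine ⟨?_, hlip⟩
    refine NNReal.coe_lt_coe.mp (?_ : ((⟨1 / (4 * ξ), hK0⟩ : NNReal) : ℝ) < ((1 : NNReal) : ℝ))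
    push_cast
    rw [div_lt_one (by linarith)]
    linarith
  let zse : EuclideanSpace ℝ (Fin C) := ContractingWith.fixedPoint f hcontr
  set zs : Fin C → ℝ := zse.ofLp with hzs
  have hfix : thetaMap ξ b zs = zs := by
    have := congrArg WithLp.ofLp hcontr.fixedPoint_isFixedPt; exact this
  refine ⟨zs, hfix, fun z' h => by
    have := hcontr.fixedPoint_unique' (x := WithLp.toLp 2 z') (y := zse)
      (congrArg (WithLp.toLp 2) h) hcontr.fixedPoint_isFixedPt
    exact congrArg WithLp.ofLp this, ?_, ?_, ?_⟩
  · -- iterates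
    intro z₀ m
    induction m with
    | zero => simp
    | succ m ih =>
      have step : Real.sqrt (∑ c, ((thetaMap ξ b)^[m + 1] z₀ c - zs c) ^ 2)
          ≤ (1 / (4 * ξ)) * Real.sqrt (∑ c, ((thetaMap ξ b)^[m] z₀ c - zs c) ^ 2) := by
        calc Real.sqrt (∑ c, ((thetaMap ξ b)^[m + 1] z₀ c - zs c) ^ 2)
            = Real.sqrt (∑ c, (thetaMap ξ b ((thetaMap ξ b)^[m] z₀) c
                - thetaMap ξ b zs c) ^ 2) := by
              rw [Function.iterate_succ_apply', hfix]
          _ ≤ (1 / (4 * ξ)) * Real.sqrt (∑ c, ((thetaMap ξ b)^[m] z₀ c - zs c) ^ 2) :=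
              theta_sqrt_lip hC hξ b _ zs
      calc Real.sqrt (∑ c, ((thetaMap ξ b)^[m + 1] z₀ c - zs c) ^ 2)
          ≤ (1 / (4 * ξ)) * Real.sqrt (∑ c, ((thetaMap ξ b)^[m] z₀ c - zs c) ^ 2) := step
        _ ≤ (1 / (4 * ξ)) * ((1 / (4 * ξ)) ^ m * Real.sqrt (∑ c, (z₀ c - zs c) ^ 2)) :=
            mul_le_mul_of_nonneg_left ih hK0
        _ = (1 / (4 * ξ)) ^ (m + 1) * Real.sqrt (∑ c, (z₀ c - zs c) ^ 2) := by ring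
  · exact potential_strictconvex hC hξ0 b
  · -- global minimizer
    intro z hz
    have hcoeff : ∀ c, softmax zs c + 2 * ξ * zs c + b c = 0 := by
      intro c
      have h := congrFun hfix c
      simp only [thetaMap] at h
      field_simp at h
      nlinarith [h]
    set v : Fin C → ℝ := fun c => z c - zs c with hv
    have hgd : HasDerivAt (fun t : ℝ => potential ξ b (fun c => zs c + t * v c)) 0 0 := by
      have h := potential_line_hasDerivAt hC ξ b zs v
      have h0 : ∑ c, (softmax zs c + 2 * ξ * zs c + b c) * v c = 0 := by
        rw [Finset.sum_congr rfl fun c _ => by rw [hcoeff c, zero_mul]]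
        exact Finset.sum_const_zero
      rwa [h0] at h
    have hsc := potential_strictconvex hC hξ0 b
    have hgconv : ConvexOn ℝ Set.univ
        (fun t : ℝ => potential ξ b (fun c => zs c + t * v c)) := by
      refine ⟨convex_univ, ?_⟩
      intro s _ t _ a e ha he hae
      have hpt : (fun c => zs c + (a • s + e • t) * v c)
          = a • (fun c => zs c + s * v c) + e • (fun c => zs c + t * v c) := by
        funext c
        simp only [Pi.add_apply, Pi.smul_apply, smul_eq_mul]
        have haa : a = 1 - e := by linarith
        subst haa; ring
      show potential ξ b (fun c => zs c + (a • s + e • t) * v c)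
          ≤ a • potential ξ b (fun c => zs c + s * v c)
            + e • potential ξ b (fun c => zs c + t * v c)
      rw [hpt]
      exact hsc.convexOn.2 (Set.mem_univ _) (Set.mem_univ _) ha he hae
    have h05 := convex_min_of_deriv_zero hgconv hgd (show (0:ℝ) < 1/2 by norm_num)
    have hg0 : (fun c => zs c + 0 * v c) = zs := by funext c; ring
    have hmid : (fun c => zs c + (1/2 : ℝ) * v c) = (1/2 : ℝ) • zs + (1/2 : ℝ) • z := by
      funext c
      simp only [Pi.add_apply, Pi.smul_apply, smul_eq_mul, hv]
      ring
    rw [hg0, hmid] at h05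
    have hstrict := hsc.2 (Set.mem_univ zs) (Set.mem_univ z) (Ne.symm hz)
      (by norm_num : (0:ℝ) < 1/2) (by norm_num : (0:ℝ) < 1/2) (by norm_num)
    simp only [smul_eq_mul] at hstrict
    linarith
end
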